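/- arXiv:1805.10550 — 8 statements merged into one kernel-verified Lean document; each statement's English description precedes it below -/
import Mathlib

section
/- Let n ≥ 3. For a partition λ = (λ_1 ≥ λ_2 ≥ …) of n, let f_n(λ) be the element of the free abelian group on the set of partitions of n−1 given by f_n(λ) = Σ_{i ≥ 1, λ_i > λ_{i+1}} [λ_1 ≥ … ≥ λ_{i-1} ≥ λ_i − 1 ≥ λ_{i+1} ≥ …]. If λ and λ' are partitions of n with f_n(λ) = f_n(λ') in this free abelian group, then λ = λ'. -/
open scoped Classical

noncomputable section

/-- `lam : ℕ → ℕ` is a partition of `n`: a weakly decreasing sequence of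
nonnegative integers, eventually zero, with sum `n`. -/
def IsPartitionFun (n : ℕ) (lam : ℕ → ℕ) : Prop :=
  Antitone lam ∧ (Function.support lam).Finite ∧ ∑ᶠ i, lam i = n

/-- `f_n(λ) = Σ_{i : λ_i > λ_{i+1}} [λ with λ_i decreased by 1]`, an element of the
free abelian group on sequences (for partitions `λ` of `n`, all terms are
partitions of `n−1`, so equality of such elements is equality in the free
abelian group `(P_{n-1})` on partitions of `n−1`). -/
def partDec (lam : ℕ → ℕ) : FreeAbelianGroup (ℕ → ℕ) :=
  ∑ᶠ i ∈ {i : ℕ | lam (i + 1) < lam i},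
    FreeAbelianGroup.of (Function.update lam i (lam i - 1))

/-!
The terms of `f_n(λ)` are pairwise distinct, so `f_n(λ)` determines the set `D(λ)` of partitions
obtained from `λ` by removing one corner box. If `λ` has at least two corners, then every part
`λ_k` survives unchanged in some member of `D(λ)`, so `λ` is the pointwise supremum of `D(λ)`;
`D(λ) = D(μ)` then gives `λ ≤ μ` and, symmetrically, `μ ≤ λ`. If `λ` has a single corner it
is a rectangle `a^(i+1)` and `D(λ) = {a^i (a-1)}`; a rectangle of size `n` is recovered from
this single partition unless `n = 2`, where `(2)` and `(1,1)` both give `(1)`.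
-/

namespace FreeAbelianGroup

variable {α : Type*}

theorem toFinsupp_finsum_mem_of {s : Set α} (hs : s.Finite) (y : α) :
    toFinsupp (∑ᶠ x ∈ s, of x) y = if y ∈ s then 1 else 0 := by
  rw [finsum_mem_eq_finite_toFinset_sum _ hs, map_sum, Finsupp.finsetSum_apply]
  simp [Finsupp.single_apply]

theorem injOn_finsum_mem_of :
    Set.InjOn (fun s : Set α => ∑ᶠ x ∈ s, of x) {s | s.Finite} := by
  intro s hs t ht h
  ext y
  have hy := congrArg (fun g => toFinsupp g y) h
  simp only [toFinsupp_finsum_mem_of hs, toFinsupp_finsum_mem_of ht] at hy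
  split_ifs at hy <;> simp_all

end FreeAbelianGroup

namespace PartitionFun

open Function

def corners (lam : ℕ → ℕ) : Set ℕ := {i | lam (i + 1) < lam i}

def removeBox (lam : ℕ → ℕ) (i : ℕ) : ℕ → ℕ := update lam i (lam i - 1)

def lowerCovers (lam : ℕ → ℕ) : Set (ℕ → ℕ) := removeBox lam '' corners lam

def rect (a i : ℕ) : ℕ → ℕ := fun j => if j ≤ i then a else 0

variable {lam mu : ℕ → ℕ}

theorem corners_finite (hs : (support lam).Finite) : (corners lam).Finite :=
  hs.subset fun i (hi : lam (i + 1) < lam i) => by simp only [mem_support]; omega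

theorem lowerCovers_finite (hs : (support lam).Finite) : (lowerCovers lam).Finite :=
  (corners_finite hs).image _

theorem corners_nonempty (hs : (support lam).Finite) (h0 : lam ≠ 0) :
    (corners lam).Nonempty := by
  obtain ⟨N, hN, hmax⟩ :=
    hs.exists_maximalFor id _ (support_nonempty_iff.mpr h0)
  have hN1 : lam (N + 1) = 0 := by
    by_contra h
    exact absurd (hmax h N.le_succ) (by simp)
  exact ⟨N, show lam (N + 1) < lam N by rw [hN1]; exact Nat.pos_of_ne_zero hN⟩

theorem removeBox_injOn : Set.InjOn (removeBox lam) (corners lam) := by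
  intro i (hi : lam (i + 1) < lam i) j _ h
  by_contra hne
  have hi' := congrFun h i
  rw [removeBox, removeBox, update_self, update_of_ne hne] at hi'
  omega

theorem partDec_eq_finsum_lowerCovers (lam : ℕ → ℕ) :
    partDec lam = ∑ᶠ ν ∈ lowerCovers lam, FreeAbelianGroup.of ν :=
  (finsum_mem_image removeBox_injOn).symm

theorem lowerCovers_eq_of_partDec_eq (hl : (support lam).Finite) (hm : (support mu).Finite)
    (h : partDec lam = partDec mu) : lowerCovers lam = lowerCovers mu := by
  rw [partDec_eq_finsum_lowerCovers, partDec_eq_finsum_lowerCovers] at h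
  exact FreeAbelianGroup.injOn_finsum_mem_of (lowerCovers_finite hl)
    (lowerCovers_finite hm) h

theorem lowerCovers_nontrivial_iff :
    (lowerCovers lam).Nontrivial ↔ (corners lam).Nontrivial :=
  removeBox_injOn.image_nontrivial_iff

theorem le_of_lowerCovers_subset (h2 : (corners lam).Nontrivial)
    (hD : lowerCovers lam ⊆ lowerCovers mu) : lam ≤ mu := by
  intro k
  obtain ⟨c, hc, hck⟩ := h2.exists_ne k
  obtain ⟨d, -, hde⟩ := hD ⟨c, hc, rfl⟩
  calc lam k = removeBox lam c k := (update_of_ne hck.symm _ _).symm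
    _ = removeBox mu d k := by rw [hde]
    _ ≤ mu k := by
      unfold removeBox
      rcases eq_or_ne k d with rfl | hkd
      · rw [update_self]; exact Nat.sub_le _ _
      · rw [update_of_ne hkd]

theorem eq_rect_of_corners_eq_singleton (hanti : Antitone lam) (hs : (support lam).Finite)
    {i : ℕ} (hc : corners lam = {i}) : lam = rect (lam 0) i := by
  have step : ∀ j ≠ i, lam (j + 1) = lam j := fun j hj =>
    (hanti j.le_succ).antisymm <| not_lt.mp fun hlt => hj (hc ▸ hlt : j ∈ ({i} : Set ℕ))
  have below : ∀ j ≤ i, lam j = lam 0 := by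
    intro j hj
    induction j with
    | zero => rfl
    | succ m ih => rw [step m (by omega), ih (by omega)]
  have above : ∀ k, lam (i + 1 + k) = lam (i + 1) := by
    intro k
    induction k with
    | zero => rfl
    | succ m ih => rw [← add_assoc, step _ (by omega), ih]
  have hzero : lam (i + 1) = 0 := by
    obtain ⟨M, hM⟩ := hs.bddAbove
    by_contra h
    have : i + 1 + M ≤ M := hM (show lam (i + 1 + M) ≠ 0 by rw [above]; exact h)
    omega
  funext j
  unfold rect
  split_ifs with hj
  · exact below j hj
  · obtain ⟨k, rfl⟩ := Nat.exists_eq_add_of_le (not_le.mp hj)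
    rw [above, hzero]

theorem finsum_rect (a i : ℕ) : ∑ᶠ j, rect a i j = (i + 1) * a := by
  have hsupp : support (rect a i) ⊆ ↑(Finset.range (i + 1)) := fun j hj => by
    by_contra h
    simp_all [rect]
  rw [finsum_eq_sum_of_support_subset _ hsupp, Finset.sum_congr (f := rect a i) (g := fun _ => a)
    rfl fun j hj => if_pos (Nat.lt_succ_iff.mp (Finset.mem_range.mp hj))]
  simp

-- Fails only for `n = 2`: `removeBox (rect 2 0) 0 = removeBox (rect 1 1) 1`.
theorem rect_eq_of_removeBox_eq {a b i j : ℕ} (hn : 3 ≤ (i + 1) * a)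
    (hab : (i + 1) * a = (j + 1) * b) (he : removeBox (rect a i) i = removeBox (rect b j) j) :
    i = j ∧ a = b := by
  wlog hij : i ≤ j generalizing a b i j
  · exact (this (hab ▸ hn) hab.symm he.symm (by omega)).imp Eq.symm Eq.symm
  rcases hij.eq_or_lt with rfl | hlt
  · exact ⟨rfl, Nat.eq_of_mul_eq_mul_left i.succ_pos hab⟩
  -- part `j` is `0` on the left and `b - 1` on the right, so `b = 1`; then part `0` gives
  -- either `a = 1`, impossible as `i < j`, or `i = 0` and `a = 2`, i.e. `n = 2`
  have hb0 : b ≠ 0 := by rintro rfl; omega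
  have hb : b = 1 := by
    have hbj := congrFun he j
    simp [removeBox, rect, hlt.ne', not_le.mpr hlt] at hbj
    omega
  subst hb
  have h0 := congrFun he 0
  rcases Nat.eq_zero_or_pos i with rfl | hi
  · simp [removeBox, rect, hlt.ne] at h0
    omega
  · simp [removeBox, rect, hi.ne, (hi.trans hlt).ne] at h0
    subst h0
    omega

theorem exists_corners_eq_singleton (hs : (support lam).Finite) (h0 : lam ≠ 0)
    (hsub : (corners lam).Subsingleton) : ∃ i, corners lam = {i} :=
  Set.exists_eq_singleton_iff_nonempty_subsingleton.mpr ⟨corners_nonempty hs h0, hsub⟩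

theorem lowerCovers_eq_singleton {i : ℕ} (hc : corners lam = {i}) :
    lowerCovers lam = {removeBox lam i} := by
  rw [lowerCovers, hc, Set.image_singleton]

theorem eq_of_corners_eq_singleton {n i j : ℕ} (hn : 3 ≤ n)
    (hlam : IsPartitionFun n lam) (hmu : IsPartitionFun n mu)
    (hi : corners lam = {i}) (hj : corners mu = {j}) (he : removeBox lam i = removeBox mu j) :
    lam = mu := by
  obtain ⟨a, rfl⟩ : ∃ a, lam = rect a i := ⟨_, eq_rect_of_corners_eq_singleton hlam.1 hlam.2.1 hi⟩
  obtain ⟨b, rfl⟩ : ∃ b, mu = rect b j := ⟨_, eq_rect_of_corners_eq_singleton hmu.1 hmu.2.1 hj⟩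
  have hna : (i + 1) * a = n := finsum_rect a i ▸ hlam.2.2
  have hnb : (j + 1) * b = n := finsum_rect b j ▸ hmu.2.2
  obtain ⟨rfl, rfl⟩ := rect_eq_of_removeBox_eq (hna ▸ hn) (hna.trans hnb.symm) he
  rfl

end PartitionFun

open PartitionFun in
/-- for `n ≥ 3`, a partition `λ` of `n` is determined by
`f_n(λ) ∈ (P_{n-1})`. -/
theorem statement2 (n : ℕ) (hn : 3 ≤ n) (lam mu : ℕ → ℕ)
    (hlam : IsPartitionFun n lam) (hmu : IsPartitionFun n mu)
    (h : partDec lam = partDec mu) : lam = mu := by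
  have hD := lowerCovers_eq_of_partDec_eq hlam.2.1 hmu.2.1 h
  have hnt : (corners lam).Nontrivial ↔ (corners mu).Nontrivial := by
    rw [← lowerCovers_nontrivial_iff, ← lowerCovers_nontrivial_iff, hD]
  by_cases hl : (corners lam).Nontrivial
  · exact le_antisymm (le_of_lowerCovers_subset hl hD.le)
      (le_of_lowerCovers_subset (hnt.mp hl) hD.ge)
  have ne_zero {nu : ℕ → ℕ} (hnu : IsPartitionFun n nu) : nu ≠ 0 := by
    rintro rfl
    simp [IsPartitionFun] at hnu
    omega
  obtain ⟨i, hi⟩ := exists_corners_eq_singleton hlam.2.1 (ne_zero hlam)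
    (Set.not_nontrivial_iff.mp hl)
  obtain ⟨j, hj⟩ := exists_corners_eq_singleton hmu.2.1 (ne_zero hmu)
    (Set.not_nontrivial_iff.mp (hnt.not.mp hl))
  rw [lowerCovers_eq_singleton hi, lowerCovers_eq_singleton hj,
    Set.singleton_eq_singleton_iff] at hD
  exact eq_of_corners_eq_singleton hn hlam hmu hi hj hD
end
end

section
/- Let n ≥ 4 and let (λ', λ'') and (μ', μ'') be bipartitions of n with λ' ≠ λ'' and μ' ≠ μ''. If ff_n(λ', λ'') + ff_n(λ'', λ') = ff_n(μ', μ'') + ff_n(μ'', μ') in the free abelian group on bipartitions of n−1, then (λ', λ'') = (μ', μ'') or (λ', λ'') = (μ'', μ'). -/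
open scoped Classical

noncomputable section

/-- `p = (λ', λ'')` is a bipartition of `n`: `λ'`, `λ''` are partitions with
`|λ'| + |λ''| = n`. -/
def IsBipartitionFun (n : ℕ) (p : (ℕ → ℕ) × (ℕ → ℕ)) : Prop :=
  ∃ a b : ℕ, IsPartitionFun a p.1 ∧ IsPartitionFun b p.2 ∧ a + b = n

/-- `ff_n(λ', λ'') = f(λ') ⊗ λ'' + λ' ⊗ f(λ'')`, an element of the free abelian
group on pairs of sequences (for bipartitions of `n`, all terms are bipartitions
of `n−1`, so equalities below are equalities in the free abelian group
`(BP_{n-1})` on bipartitions of `n−1`). -/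
def bipartDec (p : (ℕ → ℕ) × (ℕ → ℕ)) : FreeAbelianGroup ((ℕ → ℕ) × (ℕ → ℕ)) :=
  (∑ᶠ i ∈ {i : ℕ | p.1 (i + 1) < p.1 i},
    FreeAbelianGroup.of (Function.update p.1 i (p.1 i - 1), p.2)) +
  (∑ᶠ i ∈ {i : ℕ | p.2 (i + 1) < p.2 i},
    FreeAbelianGroup.of (p.1, Function.update p.2 i (p.2 i - 1)))

/-!
Since `ff(λ', λ'') + ff(λ'', λ')` is a sum of basis elements with no signs, the hypothesis only
says that the two sides have the same support: the set of pairs obtained from `(λ', λ'')` or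
`(λ'', λ')` by removing one box. Probing this set at suitable pairs pins down the two components,
once sizes are taken into account: if `λ''` is not empty and `λ'` is a largest component, the
pairs `(λ', μ)` with `μ` a removal of `λ''` force `λ' ∈ {μ', μ''}`, and then the second
component is forced as well. When `λ'' = μ'' = ∅` one needs instead that a partition of size at
least `3` is determined by its set of removals: two different partitions with the same removals
each have a single corner, i.e. are rectangles, and this only happens for `(2)` and `(1, 1)`.
-/

open Function

theorem FreeAbelianGroup.coeff_finsum_mem_of {ι X : Type*} (g : ι → X) {s : Set ι}
    (hs : s.Finite) (z : X) :
    coeff z (∑ᶠ i ∈ s, of (g i)) = ({i ∈ s | g i = z}.ncard : ℤ) := by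
  classical
  rw [finsum_mem_eq_finite_toFinset_sum _ hs, map_sum]
  simp only [coeff, AddMonoidHom.coe_comp, comp_apply, toFinsupp_of,
    Finsupp.applyAddHom_apply, Finsupp.single_apply, Finset.sum_boole]
  rw [← Set.ncard_coe_finset]
  congr 2
  ext i
  simp

theorem ncard_sep_eq_ne_zero_iff {ι X : Type*} {g : ι → X} {s : Set ι} (hs : s.Finite)
    (z : X) :
    {i ∈ s | g i = z}.ncard ≠ 0 ↔ z ∈ g '' s := by
  rw [← Nat.pos_iff_ne_zero, Set.ncard_pos (hs.subset (Set.sep_subset _ _))]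
  rfl

def corners (l : ℕ → ℕ) : Set ℕ := {i | l (i + 1) < l i}

def removeBox (l : ℕ → ℕ) (i : ℕ) : ℕ → ℕ := update l i (l i - 1)

def boxRemovals (l : ℕ → ℕ) : Set (ℕ → ℕ) := removeBox l '' corners l

theorem finite_corners {l : ℕ → ℕ} (hl : (support l).Finite) : (corners l).Finite :=
  hl.subset fun i (hi : l (i + 1) < l i) => by rw [mem_support]; omega

theorem removeBox_add_single {l : ℕ → ℕ} {i : ℕ} (hi : 0 < l i) :
    removeBox l i + Pi.single i 1 = l := by
  ext j
  rcases eq_or_ne j i with rfl | hj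
  · simp only [removeBox, Pi.add_apply, update_self, Pi.single_eq_same]
    omega
  · simp [removeBox, hj]

theorem Antitone.apply_eq_of_forall_notMem_corners {l : ℕ → ℕ} (hl : Antitone l) {j k : ℕ}
    (hjk : j ≤ k) (h : ∀ t, j ≤ t → t < k → t ∉ corners l) : l k = l j := by
  induction k, hjk using Nat.le_induction with
  | base => rfl
  | succ k hjk ih =>
    have h1 := hl (Nat.le_add_right k 1)
    have h2 : ¬ l (k + 1) < l k := h k hjk (Nat.lt_succ_self k)
    rw [← ih fun t ht htk => h t ht (by omega)]
    omega

theorem ne_and_apply_eq_of_removeBox_eq {l m : ℕ → ℕ} {i k : ℕ} (hne : l ≠ m) (hi : 0 < l i)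
    (hk : 0 < m k) (he : removeBox l i = removeBox m k) :
    i ≠ k ∧ l i = m i + 1 ∧ m k = l k + 1 ∧ ∀ j, j ≠ i → j ≠ k → l j = m j := by
  have happ (j : ℕ) : update l i (l i - 1) j = update m k (m k - 1) j := congrFun he j
  have hik : i ≠ k := by
    rintro rfl
    refine hne (funext fun j => ?_)
    have h := happ j
    rcases eq_or_ne j i with rfl | hj
    · simp only [update_self] at h
      omega
    · simpa only [update_of_ne hj] using h
  refine ⟨hik, ?_, ?_, fun j hji hjk => ?_⟩
  · have h := happ i
    rw [update_self, update_of_ne hik] at h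
    omega
  · have h := happ k
    rw [update_self, update_of_ne hik.symm] at h
    omega
  · simpa only [update_of_ne hji, update_of_ne hjk] using happ j

theorem corners_subset_singleton_of_boxRemovals_subset {l m : ℕ → ℕ} {i k : ℕ} (hne : l ≠ m)
    (hsub : boxRemovals l ⊆ boxRemovals m) (hk : m k = l k + 1)
    (hoff : ∀ j, j ≠ i → j ≠ k → l j = m j) : corners l ⊆ {i} := by
  intro j hj
  obtain ⟨t, ht, he⟩ := hsub ⟨j, hj, rfl⟩
  obtain ⟨-, hj1, ht1, -⟩ :=
    ne_and_apply_eq_of_removeBox_eq hne (Nat.zero_lt_of_lt hj) (Nat.zero_lt_of_lt ht) he.symm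
  by_contra hji
  replace hji : j ≠ i := hji
  rcases eq_or_ne j k with rfl | hjk
  · omega
  · have := hoff j hji hjk
    omega

namespace IsPartitionFun

variable {a b : ℕ} {l m x : ℕ → ℕ}

theorem size_eq (hl : IsPartitionFun a l) (hm : IsPartitionFun b m) (h : l = m) : a = b := by
  subst h; exact hl.2.2.symm.trans hm.2.2

theorem le_size (hl : IsPartitionFun a l) (j : ℕ) : l j ≤ a :=
  hl.2.2 ▸ single_le_finsum j hl.2.1 fun _ => Nat.zero_le _

theorem eq_zero (hl : IsPartitionFun 0 l) : l = 0 :=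
  funext fun j => Nat.le_zero.1 (hl.le_size j)

theorem removeBox_of_mem_corners {i : ℕ} (hl : IsPartitionFun a l) (hi : i ∈ corners l) :
    0 < a ∧ IsPartitionFun (a - 1) (removeBox l i) := by
  have hi : l (i + 1) < l i := hi
  have hli : 0 < l i := by omega
  have hsupp : (support (removeBox l i)).Finite :=
    hl.2.1.subset fun j hj => by
      rw [mem_support] at hj ⊢
      rcases eq_or_ne j i with rfl | hji
      · omega
      · rwa [removeBox, update_of_ne hji] at hj
  refine ⟨hli.trans_le (hl.le_size i), ?_, hsupp, ?_⟩
  · refine antitone_nat_of_succ_le fun j => ?_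
    have := hl.1 (Nat.le_add_right j 1)
    simp only [removeBox, update_apply]
    split_ifs with h1 h2 <;> subst_vars <;> omega
  · have hsum := congrArg (fun f => ∑ᶠ j, f j) (removeBox_add_single hli)
    simp only [Pi.add_apply] at hsum
    rw [finsum_add_distrib hsupp ((Set.finite_singleton i).subset Pi.support_single_subset),
      finsum_eq_single (fun j => (Pi.single i 1 : ℕ → ℕ) j) i fun j hj => Pi.single_eq_of_ne hj 1,
      Pi.single_eq_same, hl.2.2] at hsum
    omega

theorem of_mem_boxRemovals (hl : IsPartitionFun a l) (hx : x ∈ boxRemovals l) :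
    0 < a ∧ IsPartitionFun (a - 1) x := by
  obtain ⟨i, hi, rfl⟩ := hx
  exact hl.removeBox_of_mem_corners hi

theorem apply_eq_zero_of_forall_notMem_corners (hl : IsPartitionFun a l) {j : ℕ}
    (h : ∀ t, j ≤ t → t ∉ corners l) : l j = 0 := by
  obtain ⟨N, hN⟩ := hl.2.1.exists_notMem
  rw [mem_support, not_not] at hN
  have := hl.1 (le_max_right j N)
  rw [hl.1.apply_eq_of_forall_notMem_corners (le_max_left j N) fun t ht _ => h t ht] at this
  omega

theorem boxRemovals_nonempty (hl : IsPartitionFun a l) (ha : a ≠ 0) :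
    (boxRemovals l).Nonempty := by
  by_contra hempty
  have hl0 : l = 0 := funext fun j =>
    hl.apply_eq_zero_of_forall_notMem_corners fun t _ ht => hempty ⟨_, t, ht, rfl⟩
  exact ha (by rw [← hl.2.2, hl0]; simp)

theorem eq_two_of_corners_subset_singleton {i k : ℕ} (hl : IsPartitionFun a l)
    (hm : IsPartitionFun b m) (hik : i < k) (hl' : corners l ⊆ {i}) (hm' : corners m ⊆ {k})
    (hi : l i = m i + 1) (hk : m k = l k + 1)
    (hoff : ∀ j, j ≠ i → j ≠ k → l j = m j) : a = 2 := by
  -- `l` and `m` are rectangles, so `m` is `1` up to row `k`, `l i = 2`, and row `0` forces `i = 0`.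
  have hlk : l k = 0 := hl.apply_eq_zero_of_forall_notMem_corners fun t ht htc => by
    have : t = i := hl' htc
    omega
  have hmi : m k = m i := hm.1.apply_eq_of_forall_notMem_corners hik.le fun t _ htk htc => by
    have : t = k := hm' htc
    omega
  have hi0 : i = 0 := by
    by_contra h0
    have h1 : l i = l 0 := hl.1.apply_eq_of_forall_notMem_corners (Nat.zero_le i)
      fun t _ hti htc => by have : t = i := hl' htc; omega
    have h2 : m k = m 0 := hm.1.apply_eq_of_forall_notMem_corners (Nat.zero_le k)
      fun t _ htk htc => by have : t = k := hm' htc; omega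
    have := hoff 0 (Ne.symm h0) (by omega)
    omega
  subst hi0
  have hl1 (j : ℕ) (hj : j ≠ 0) : l j = 0 := hl.apply_eq_zero_of_forall_notMem_corners
    fun t ht htc => by have : t = 0 := hl' htc; omega
  rw [← hl.2.2, finsum_eq_single _ 0 hl1]
  omega

theorem eq_of_boxRemovals_eq (hl : IsPartitionFun a l) (hm : IsPartitionFun a m) (ha : 3 ≤ a)
    (h : boxRemovals l = boxRemovals m) : l = m := by
  by_contra hne
  obtain ⟨_, i, hi, rfl⟩ := hl.boxRemovals_nonempty (by omega)
  obtain ⟨k, hk, he⟩ : removeBox l i ∈ boxRemovals m := h ▸ ⟨i, hi, rfl⟩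
  obtain ⟨hik, hli, hmk, hoff⟩ :=
    ne_and_apply_eq_of_removeBox_eq hne (Nat.zero_lt_of_lt hi) (Nat.zero_lt_of_lt hk) he.symm
  have hl' := corners_subset_singleton_of_boxRemovals_subset hne h.subset hmk hoff
  have hm' := corners_subset_singleton_of_boxRemovals_subset (Ne.symm hne) h.symm.subset hli
    fun j hjk hji => (hoff j hji hjk).symm
  rcases hik.lt_or_gt with hik | hik
  · have := hl.eq_two_of_corners_subset_singleton hm hik hl' hm' hli hmk hoff
    omega
  · have := hm.eq_two_of_corners_subset_singleton hl hik hm' hl' hmk hli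
      fun j hjk hji => (hoff j hji hjk).symm
    omega

end IsPartitionFun

def bipartRemovals (p : (ℕ → ℕ) × (ℕ → ℕ)) : Set ((ℕ → ℕ) × (ℕ → ℕ)) :=
  (·, p.2) '' boxRemovals p.1 ∪ (p.1, ·) '' boxRemovals p.2

def symmBipartRemovals (p : (ℕ → ℕ) × (ℕ → ℕ)) : Set ((ℕ → ℕ) × (ℕ → ℕ)) :=
  bipartRemovals p ∪ bipartRemovals p.swap

theorem symmBipartRemovals_swap (p : (ℕ → ℕ) × (ℕ → ℕ)) :
    symmBipartRemovals p.swap = symmBipartRemovals p := by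
  rw [symmBipartRemovals, symmBipartRemovals, Prod.swap_swap, Set.union_comm]

theorem mem_symmBipartRemovals {α β x y : ℕ → ℕ} :
    (x, y) ∈ symmBipartRemovals (α, β) ↔
      y = β ∧ x ∈ boxRemovals α ∨ x = α ∧ y ∈ boxRemovals β ∨
        y = α ∧ x ∈ boxRemovals β ∨ x = β ∧ y ∈ boxRemovals α := by
  simp only [symmBipartRemovals, bipartRemovals, Set.mem_union, Set.mem_image, Prod.swap_prod_mk,
    Prod.mk.injEq]
  aesop

theorem coeff_bipartDec {p : (ℕ → ℕ) × (ℕ → ℕ)} (hp₁ : (support p.1).Finite)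
    (hp₂ : (support p.2).Finite) (z : (ℕ → ℕ) × (ℕ → ℕ)) :
    FreeAbelianGroup.coeff z (bipartDec p) =
      (({i ∈ corners p.1 | (removeBox p.1 i, p.2) = z}.ncard +
        {i ∈ corners p.2 | (p.1, removeBox p.2 i) = z}.ncard : ℕ) : ℤ) := by
  rw [bipartDec, map_add, Nat.cast_add]
  exact congrArg₂ (· + ·)
    (FreeAbelianGroup.coeff_finsum_mem_of (fun i => (removeBox p.1 i, p.2)) (finite_corners hp₁) z)
    (FreeAbelianGroup.coeff_finsum_mem_of (fun i => (p.1, removeBox p.2 i)) (finite_corners hp₂) z)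

theorem coe_support_bipartDec_add_swap {p : (ℕ → ℕ) × (ℕ → ℕ)} (hp₁ : (support p.1).Finite)
    (hp₂ : (support p.2).Finite) :
    ((bipartDec p + bipartDec p.swap).support : Set ((ℕ → ℕ) × (ℕ → ℕ))) =
      symmBipartRemovals p := by
  ext z
  rw [Finset.mem_coe, FreeAbelianGroup.mem_support_iff, map_add,
    coeff_bipartDec hp₁ hp₂, coeff_bipartDec hp₂ hp₁, symmBipartRemovals, bipartRemovals,
    bipartRemovals]
  simp only [Prod.fst_swap, Prod.snd_swap, Set.mem_union, boxRemovals, Set.image_image,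
    ← ncard_sep_eq_ne_zero_iff (finite_corners hp₁),
    ← ncard_sep_eq_ne_zero_iff (finite_corners hp₂)]
  omega

section

variable {a b c d : ℕ} {α β γ δ : ℕ → ℕ}

theorem eq_or_eq_of_symmBipartRemovals_eq (hα : IsPartitionFun a α) (hβ : IsPartitionFun b β)
    (hγ : IsPartitionFun c γ) (hδ : IsPartitionFun d δ) (hb : 0 < b) (hca : c ≤ a) (hda : d ≤ a)
    (h : symmBipartRemovals (α, β) = symmBipartRemovals (γ, δ)) : α = γ ∨ α = δ := by
  obtain ⟨y, hy⟩ := hβ.boxRemovals_nonempty hb.ne'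
  have hmem : (α, y) ∈ symmBipartRemovals (γ, δ) :=
    h ▸ mem_symmBipartRemovals.2 (Or.inr (Or.inl ⟨rfl, hy⟩))
  rcases mem_symmBipartRemovals.1 hmem with ⟨-, hαγ⟩ | ⟨hαγ, -⟩ | ⟨-, hαδ⟩ | ⟨hαδ, -⟩
  · obtain ⟨hc, hα'⟩ := hγ.of_mem_boxRemovals hαγ
    have := hα'.size_eq hα rfl
    omega
  · exact Or.inl hαγ
  · obtain ⟨hd, hα'⟩ := hδ.of_mem_boxRemovals hαδ
    have := hα'.size_eq hα rfl
    omega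
  · exact Or.inr hαδ

theorem snd_eq_of_symmBipartRemovals_eq (hα : IsPartitionFun a α) (ha : 0 < a)
    (h : symmBipartRemovals (α, β) = symmBipartRemovals (α, δ)) : β = δ := by
  obtain ⟨x, hx⟩ := hα.boxRemovals_nonempty ha.ne'
  have hxα : x ≠ α := fun e => by
    have := (hα.of_mem_boxRemovals hx).2.size_eq hα e
    omega
  have h₁ : (x, δ) ∈ symmBipartRemovals (α, β) := h ▸ mem_symmBipartRemovals.2 (Or.inl ⟨rfl, hx⟩)
  have h₂ : (x, β) ∈ symmBipartRemovals (α, δ) := h ▸ mem_symmBipartRemovals.2 (Or.inl ⟨rfl, hx⟩)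
  rw [mem_symmBipartRemovals] at h₁ h₂
  -- Every combination of the two case splits gives `β = δ` or `x = α`.
  aesop

theorem fst_eq_of_symmBipartRemovals_eq (hα : IsPartitionFun a α) (hβ : IsPartitionFun 0 β)
    (hγ : IsPartitionFun a γ) (ha : 3 ≤ a)
    (h : symmBipartRemovals (α, β) = symmBipartRemovals (γ, β)) : α = γ := by
  have key {α γ : ℕ → ℕ} (hα : IsPartitionFun a α) (hγ : IsPartitionFun a γ)
      (h : symmBipartRemovals (α, β) = symmBipartRemovals (γ, β)) :
      boxRemovals α ⊆ boxRemovals γ := by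
    intro x hx
    have hx' := (hα.of_mem_boxRemovals hx).2
    have hmem : (x, β) ∈ symmBipartRemovals (γ, β) :=
      h ▸ mem_symmBipartRemovals.2 (Or.inl ⟨rfl, hx⟩)
    rcases mem_symmBipartRemovals.1 hmem with ⟨-, hxγ⟩ | ⟨e, -⟩ | ⟨e, -⟩ | ⟨e, -⟩
    · exact hxγ
    · have := hx'.size_eq hγ e
      omega
    · have := hβ.size_eq hγ e
      omega
    · have := hx'.size_eq hβ e
      omega
  exact hα.eq_of_boxRemovals_eq hγ ha ((key hα hγ h).antisymm (key hγ hα h.symm))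

theorem symmBipartRemovals_ne (hα : IsPartitionFun a α) (hβ : IsPartitionFun 0 β)
    (hγ : IsPartitionFun c γ) (hδ : IsPartitionFun d δ) (hd : 0 < d) (hdc : d ≤ c)
    (hsum : a = c + d) (ha : 3 ≤ a) : symmBipartRemovals (α, β) ≠ symmBipartRemovals (γ, δ) := by
  intro h
  obtain ⟨x, hx⟩ := hγ.boxRemovals_nonempty (by omega)
  have hx' := (hγ.of_mem_boxRemovals hx).2
  have hmem : (x, δ) ∈ symmBipartRemovals (α, β) :=
    h ▸ mem_symmBipartRemovals.2 (Or.inl ⟨rfl, hx⟩)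
  rcases mem_symmBipartRemovals.1 hmem with ⟨e, -⟩ | ⟨e, -⟩ | ⟨e, -⟩ | ⟨-, hδα⟩
  · have := hδ.size_eq hβ e
    omega
  · have := hx'.size_eq hα e
    omega
  · have := hδ.size_eq hα e
    omega
  · have := (hα.of_mem_boxRemovals hδα).2.size_eq hδ rfl
    omega

end

theorem eq_or_eq_swap_of_symmBipartRemovals_eq {a b c d : ℕ} {p q : (ℕ → ℕ) × (ℕ → ℕ)}
    (hp₁ : IsPartitionFun a p.1) (hp₂ : IsPartitionFun b p.2) (hq₁ : IsPartitionFun c q.1)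
    (hq₂ : IsPartitionFun d q.2) (hsum : a + b = c + d) (hn : 3 ≤ a + b)
    (h : symmBipartRemovals p = symmBipartRemovals q) : p = q ∨ p = q.swap := by
  wlog hba : b ≤ a generalizing a b p
  · rcases this hp₂ hp₁ (by omega) (by omega) ((symmBipartRemovals_swap p).trans h) (by omega)
      with h' | h'
    · exact Or.inr (by rw [← h', Prod.swap_swap])
    · exact Or.inl (by rw [← Prod.swap_swap p, h', Prod.swap_swap])
  wlog hdc : d ≤ c generalizing c d q
  · have := this hq₂ hq₁ (by omega) (h.trans (symmBipartRemovals_swap q).symm) (by omega)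
    rwa [Prod.swap_swap, or_comm] at this
  wlog hca : c ≤ a generalizing a b c d p q
  · rcases this hq₁ hq₂ (by omega) hdc hp₁ hp₂ (by omega) h.symm hba (by omega) with rfl | rfl
    · exact Or.inl rfl
    · exact Or.inr (Prod.swap_swap p).symm
  obtain ⟨α, β⟩ := p
  obtain ⟨γ, δ⟩ := q
  dsimp only at hp₁ hp₂ hq₁ hq₂
  rcases Nat.eq_zero_or_pos b with rfl | hb
  · rcases Nat.eq_zero_or_pos d with rfl | hd
    · obtain rfl : c = a := by omega
      obtain rfl : δ = β := hq₂.eq_zero.trans hp₂.eq_zero.symm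
      rw [fst_eq_of_symmBipartRemovals_eq hp₁ hp₂ hq₁ (by omega) h]
      exact Or.inl rfl
    · exact absurd h (symmBipartRemovals_ne hp₁ hp₂ hq₁ hq₂ hd hdc (by omega) (by omega))
  · rcases eq_or_eq_of_symmBipartRemovals_eq hp₁ hp₂ hq₁ hq₂ hb hca (by omega) h with rfl | rfl
    · rw [snd_eq_of_symmBipartRemovals_eq hp₁ (by omega) h]
      exact Or.inl rfl
    · rw [snd_eq_of_symmBipartRemovals_eq hp₁ (by omega) (h.trans (symmBipartRemovals_swap _).symm)]
      exact Or.inr rfl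

theorem statement4_general (n : ℕ) (hn : 4 ≤ n) (p q : (ℕ → ℕ) × (ℕ → ℕ))
    (hp : IsBipartitionFun n p) (hq : IsBipartitionFun n q)
    (h : bipartDec p + bipartDec p.swap = bipartDec q + bipartDec q.swap) :
    p = q ∨ p = q.swap := by
  obtain ⟨a, b, hp₁, hp₂, rfl⟩ := hp
  obtain ⟨c, d, hq₁, hq₂, hcd⟩ := hq
  have hR : symmBipartRemovals p = symmBipartRemovals q := by
    rw [← coe_support_bipartDec_add_swap hp₁.2.1 hp₂.2.1,
      ← coe_support_bipartDec_add_swap hq₁.2.1 hq₂.2.1, h]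
  exact eq_or_eq_swap_of_symmBipartRemovals_eq hp₁ hp₂ hq₁ hq₂ hcd.symm (by omega) hR

/-- for `n ≥ 4` and bipartitions `(λ',λ'')`, `(μ',μ'')` of `n` with
`λ' ≠ λ''` and `μ' ≠ μ''`, if `ff_n(λ',λ'') + ff_n(λ'',λ') = ff_n(μ',μ'') + ff_n(μ'',μ')`
then the bipartitions agree up to swapping the two components. -/
theorem statement4 (n : ℕ) (hn : 4 ≤ n) (p q : (ℕ → ℕ) × (ℕ → ℕ))
    (hp : IsBipartitionFun n p) (hq : IsBipartitionFun n q)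
    (hp' : p.1 ≠ p.2) (hq' : q.1 ≠ q.2)
    (h : bipartDec p + bipartDec p.swap = bipartDec q + bipartDec q.swap) :
    p = q ∨ p = q.swap :=
  statement4_general n hn p q hp hq h
end
end

section
/- Let n ≥ 4 and let (λ', λ'') be a bipartition of n with λ' ≠ λ''. Then there is no partition μ with |μ| = n/2 such that ff_n(λ', λ'') + ff_n(λ'', λ') = ff_n(μ, μ) in the free abelian group on bipartitions of n−1. -/
open scoped Classical

noncomputable section

/-! Compare coefficients. Lowering a corner `i` of `λ'` to `w` gives the term `(w, λ'')` of
`ff(λ', λ'')`, and all coefficients of the left-hand side are nonnegative, so `(w, λ'')` has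
positive coefficient there. Every term of `ff(μ, μ)` has `μ` as one of its two components, so
`(w, λ'')` does not occur in `ff(μ, μ)` once `λ'' ≠ μ` and `|w| = |λ'| - 1 ≠ |μ|`. Since
`|λ'| + |λ''| = 2|μ| ≥ 4` and `λ' ≠ λ''`, one of the two orderings of the bipartition meets
these conditions. -/

open FreeAbelianGroup

namespace FreeAbelianGroup

variable {ι X : Type*}

theorem coeff_of (x y : X) : coeff x (of y) = if y = x then 1 else 0 := by
  simp [coeff, Finsupp.single_apply]

theorem coeff_finsum_mem_of_nonneg (x : X) (s : Set ι) (g : ι → X) :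
    0 ≤ coeff x (∑ᶠ i ∈ s, of (g i)) :=
  finsum_mem_induction (fun z => 0 ≤ coeff x z) (by simp)
    (fun _ _ hy hz => by rw [map_add]; omega)
    (fun i _ => by rw [coeff_of]; split_ifs <;> simp)

theorem coeff_finsum_mem_of_eq_zero {x : X} {s : Set ι} {g : ι → X} (h : ∀ i ∈ s, g i ≠ x) :
    coeff x (∑ᶠ i ∈ s, of (g i)) = 0 :=
  finsum_mem_induction (fun z => coeff x z = 0) (by simp)
    (fun _ _ hy hz => by rw [map_add, hy, hz, add_zero])
    (fun i hi => by rw [coeff_of, if_neg (h i hi)])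

theorem one_le_coeff_finsum_mem_of {s : Set ι} (hs : s.Finite) (g : ι → X) {i : ι} (hi : i ∈ s) :
    1 ≤ coeff (g i) (∑ᶠ j ∈ s, of (g j)) := by
  rw [← finsum_mem_add_sdiff (Set.singleton_subset_iff.2 hi) hs, finsum_mem_singleton, map_add,
    coeff_of, if_pos rfl]
  exact le_add_of_nonneg_right (coeff_finsum_mem_of_nonneg (g i) (s \ {i}) g)

end FreeAbelianGroup

theorem finite_setOf_succ_lt {lam : ℕ → ℕ} (hfin : (Function.support lam).Finite) :
    {i | lam (i + 1) < lam i}.Finite :=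
  hfin.subset fun i (hi : lam (i + 1) < lam i) => Nat.ne_zero_of_lt hi

theorem exists_succ_lt_of_finsum_pos {lam : ℕ → ℕ} (hfin : (Function.support lam).Finite)
    (hpos : 0 < ∑ᶠ i, lam i) : ∃ i, lam (i + 1) < lam i := by
  by_contra! hmono
  have hzero : lam = 0 := funext fun j => by
    obtain ⟨i, hi, hji⟩ := hfin.infinite_compl.exists_gt j
    have := monotone_nat_of_le_succ hmono hji.le
    simp_all
  simp [hzero] at hpos

theorem finsum_update_pred_add_one {lam : ℕ → ℕ} (hfin : (Function.support lam).Finite) {i : ℕ}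
    (hi : 0 < lam i) : (∑ᶠ j, Function.update lam i (lam i - 1) j) + 1 = ∑ᶠ j, lam j := by
  have hfin' : (Function.support (Function.update lam i (lam i - 1))).Finite :=
    (hfin.insert i).subset fun j hj => by
      by_cases hji : j = i
      · exact Or.inl hji
      · exact Or.inr (by simpa [Function.update_of_ne hji] using hj)
  have hrest : ∑ᶠ (j) (_ : j ≠ i), Function.update lam i (lam i - 1) j =
      ∑ᶠ (j) (_ : j ≠ i), lam j :=
    finsum_congr fun j => finsum_congr fun hji => Function.update_of_ne hji _ _
  rw [← add_finsum_cond_ne i hfin, ← add_finsum_cond_ne i hfin', Function.update_self, hrest]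
  omega

theorem coeff_bipartDec_nonneg (x p : (ℕ → ℕ) × (ℕ → ℕ)) : 0 ≤ coeff x (bipartDec p) := by
  rw [bipartDec, map_add]
  exact add_nonneg (coeff_finsum_mem_of_nonneg _ _ _) (coeff_finsum_mem_of_nonneg _ _ _)

theorem one_le_coeff_bipartDec {l₁ : ℕ → ℕ} (hfin : (Function.support l₁).Finite)
    (l₂ : ℕ → ℕ) {i : ℕ} (hi : l₁ (i + 1) < l₁ i) :
    1 ≤ coeff (Function.update l₁ i (l₁ i - 1), l₂) (bipartDec (l₁, l₂)) := by
  rw [bipartDec, map_add]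
  exact le_add_of_le_of_nonneg
    (one_le_coeff_finsum_mem_of (finite_setOf_succ_lt hfin)
      (fun j => (Function.update l₁ j (l₁ j - 1), l₂)) hi)
    (coeff_finsum_mem_of_nonneg _ _ _)

theorem coeff_bipartDec_diag_eq_zero {x : (ℕ → ℕ) × (ℕ → ℕ)} {mu : ℕ → ℕ}
    (h₁ : x.1 ≠ mu) (h₂ : x.2 ≠ mu) : coeff x (bipartDec (mu, mu)) = 0 := by
  rw [bipartDec, map_add, coeff_finsum_mem_of_eq_zero fun i _ h => h₂ (congrArg Prod.snd h).symm,
    coeff_finsum_mem_of_eq_zero fun i _ h => h₁ (congrArg Prod.fst h).symm, add_zero]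

theorem bipartDec_add_swap_ne_diag {a k : ℕ} {l₁ l₂ mu : ℕ → ℕ}
    (h₁ : IsPartitionFun a l₁) (hmu : IsPartitionFun k mu) (ha : 0 < a) (hak : a ≠ k + 1)
    (hl₂ : l₂ ≠ mu) : bipartDec (l₁, l₂) + bipartDec (l₂, l₁) ≠ bipartDec (mu, mu) := by
  obtain ⟨-, hfin, hsum⟩ := h₁
  obtain ⟨i, hi⟩ := exists_succ_lt_of_finsum_pos hfin (hsum ▸ ha)
  set w := Function.update l₁ i (l₁ i - 1)
  have hw : w ≠ mu := fun h => by
    have hsize : (∑ᶠ j, w j) + 1 = ∑ᶠ j, l₁ j :=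
      finsum_update_pred_add_one hfin (Nat.zero_lt_of_lt hi)
    rw [h, hmu.2.2, hsum] at hsize
    omega
  intro heq
  have hcoeff := congrArg (coeff (w, l₂)) heq
  rw [map_add, coeff_bipartDec_diag_eq_zero hw hl₂] at hcoeff
  linarith [one_le_coeff_bipartDec hfin l₂ hi, coeff_bipartDec_nonneg (w, l₂) (l₂, l₁)]

/-- for `n ≥ 4` and a bipartition `(λ',λ'')` of `n` with `λ' ≠ λ''`,
there is no partition `μ` with `|μ| = n/2` such that
`ff_n(λ',λ'') + ff_n(λ'',λ') = ff_n(μ,μ)`. -/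
theorem statement5 (n : ℕ) (hn : 4 ≤ n) (p : (ℕ → ℕ) × (ℕ → ℕ))
    (hp : IsBipartitionFun n p) (hp' : p.1 ≠ p.2) :
    ∀ (mu : ℕ → ℕ) (k : ℕ), IsPartitionFun k mu → 2 * k = n →
      bipartDec p + bipartDec p.swap ≠ bipartDec (mu, mu) := by
  intro mu k hmu hk
  obtain ⟨l₁, l₂⟩ := p
  obtain ⟨a, b, h₁, h₂, hab⟩ := hp
  have ne_mu {c : ℕ} {l : ℕ → ℕ} (hl : IsPartitionFun c l) (hc : c ≠ k) : l ≠ mu :=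
    fun he => hc (hl.2.2.symm.trans (he ▸ hmu.2.2))
  have hgood : (0 < a ∧ a ≠ k + 1 ∧ l₂ ≠ mu) ∨ (0 < b ∧ b ≠ k + 1 ∧ l₁ ≠ mu) := by
    by_cases hak : a = k
    · by_cases hl₂ : l₂ = mu
      · exact .inr ⟨by omega, by omega, fun hl₁ => hp' (hl₁.trans hl₂.symm)⟩
      · exact .inl ⟨by omega, by omega, hl₂⟩
    · by_cases ha : 0 < a ∧ a ≠ k + 1
      · exact .inl ⟨ha.1, ha.2, ne_mu h₂ (by omega)⟩
      · exact .inr ⟨by omega, by omega, ne_mu h₁ hak⟩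
  rcases hgood with ⟨ha, hak, hl₂⟩ | ⟨hb, hbk, hl₁⟩
  · exact bipartDec_add_swap_ne_diag h₁ hmu ha hak hl₂
  · rw [Prod.swap_prod_mk, add_comm]
    exact bipartDec_add_swap_ne_diag h₂ hmu hb hbk hl₁
end
end

section
/- Let n ≥ 4 be even and let μ, μ' be partitions of n/2. If ff_n(μ, μ) = ff_n(μ', μ') in the free abelian group on bipartitions of n−1, then μ = μ'. -/
open scoped Classical

noncomputable section

lemma of_ne_zero {X : Type*} (x : X) : FreeAbelianGroup.of x ≠ 0 := by
  intro h
  have := congrArg FreeAbelianGroup.toFinsupp h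
  rw [FreeAbelianGroup.toFinsupp_of, map_zero] at this
  exact one_ne_zero (Finsupp.single_eq_zero.mp this)

lemma finsum_mem_of {X : Type*} {D : Set ℕ} (hD : D.Finite) (g : ℕ → X) :
    ∑ᶠ i ∈ D, FreeAbelianGroup.of (g i) = ∑ i ∈ hD.toFinset, FreeAbelianGroup.of (g i) := by
  apply finsum_mem_eq_sum_of_inter_support_eq
  have : (Function.support fun i => FreeAbelianGroup.of (g i)) = Set.univ := by
    ext i; simp [Function.mem_support, of_ne_zero]
  rw [this]; simp

lemma sum_update_sub_one (lam : ℕ → ℕ) (hfin : (Function.support lam).Finite) {i : ℕ}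
    (hi : 0 < lam i) :
    ∑ᶠ j, Function.update lam i (lam i - 1) j = (∑ᶠ j, lam j) - 1 := by
  have hmem : i ∈ hfin.toFinset := by simp [Function.mem_support]; omega
  have hsub : Function.support (Function.update lam i (lam i - 1)) ⊆ (hfin.toFinset : Set ℕ) := by
    intro j hj
    rcases eq_or_ne j i with rfl | hne
    · simpa using hmem
    · rw [Function.mem_support, Function.update_of_ne hne] at hj
      simpa using hj
  rw [finsum_eq_finset_sum_of_support_subset _ hsub, finsum_eq_sum _ hfin,
    Finset.sum_update_of_mem hmem, ← Finset.add_sum_erase _ lam hmem,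
    Finset.sdiff_singleton_eq_erase]
  omega
/-- for `n ≥ 4` even and partitions `μ`, `μ'` of `n/2`, if
`ff_n(μ,μ) = ff_n(μ',μ')` then `μ = μ'`. -/
theorem statement6 (n k : ℕ) (hn : 4 ≤ n) (hk : 2 * k = n) (mu mu' : ℕ → ℕ)
    (hmu : IsPartitionFun k mu) (hmu' : IsPartitionFun k mu')
    (h : bipartDec (mu, mu) = bipartDec (mu', mu')) : mu = mu' := by
  obtain ⟨hm1, hm2, hm3⟩ := hmu
  obtain ⟨hm1', hm2', hm3'⟩ := hmu'
  have hk2 : 2 ≤ k := by omega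
  -- mu has nonempty support
  have hne : hm2.toFinset.Nonempty := by
    rw [Set.Finite.toFinset_nonempty]
    by_contra h0
    rw [Set.not_nonempty_iff_eq_empty, Function.support_eq_empty_iff] at h0
    rw [h0] at hm3
    simp at hm3
    omega
  set m := hm2.toFinset.max' hne with hm_def
  have hmm : mu m ≠ 0 := by
    have := hm2.toFinset.max'_mem hne
    rw [Set.Finite.mem_toFinset, Function.mem_support] at this
    exact this
  have hmtop : mu (m + 1) = 0 := by
    by_contra h0
    have : m + 1 ∈ hm2.toFinset := by rwa [Set.Finite.mem_toFinset, Function.mem_support]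
    have := hm2.toFinset.le_max' _ this
    omega
  have hdm : mu (m + 1) < mu m := by omega
  -- descent sets are finite
  have hDfin : {i : ℕ | mu (i + 1) < mu i}.Finite :=
    hm2.subset (fun i hi => by simp only [Set.mem_setOf_eq] at hi; simp [Function.mem_support]; omega)
  have hDfin' : {i : ℕ | mu' (i + 1) < mu' i}.Finite :=
    hm2'.subset (fun i hi => by simp only [Set.mem_setOf_eq] at hi; simp [Function.mem_support]; omega)
  set a : (ℕ → ℕ) × (ℕ → ℕ) := (Function.update mu m (mu m - 1), mu) with ha_def
  set c : FreeAbelianGroup ((ℕ → ℕ) × (ℕ → ℕ)) →+ ℤ :=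
    (Finsupp.applyAddHom a).comp FreeAbelianGroup.toFinsupp with hc_def
  have hc_of : ∀ x : (ℕ → ℕ) × (ℕ → ℕ), c (FreeAbelianGroup.of x) = if x = a then 1 else 0 := by
    intro x
    simp [hc_def, FreeAbelianGroup.toFinsupp_of, Finsupp.single_apply]
  -- compute c of both sides
  have key : ∀ (nu : ℕ → ℕ) (hD : {i : ℕ | nu (i + 1) < nu i}.Finite),
      c (bipartDec (nu, nu)) =
        (∑ i ∈ hD.toFinset, if (Function.update nu i (nu i - 1), nu) = a then 1 else 0) +
        (∑ i ∈ hD.toFinset, if (nu, Function.update nu i (nu i - 1)) = a then 1 else 0) := by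
    intro nu hD
    rw [bipartDec]
    simp only
    rw [finsum_mem_of hD, finsum_mem_of hD, map_add, map_sum, map_sum]
    simp only [hc_of]
  have e1 := key mu hDfin
  have e2 := key mu' hDfin'
  rw [h, e2] at e1
  -- LHS is positive
  have hmemm : m ∈ hDfin.toFinset := by rwa [Set.Finite.mem_toFinset, Set.mem_setOf_eq]
  have pos1 : (1 : ℤ) ≤ ∑ i ∈ hDfin.toFinset,
      if (Function.update mu i (mu i - 1), mu) = a then (1 : ℤ) else 0 := by
    have := Finset.single_le_sum
      (f := fun i => if (Function.update mu i (mu i - 1), mu) = a then (1 : ℤ) else 0)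
      (fun i _ => by positivity) hmemm
    simpa [ha_def] using this
  have pos2 : (0 : ℤ) ≤ ∑ i ∈ hDfin.toFinset,
      if (mu, Function.update mu i (mu i - 1)) = a then (1 : ℤ) else 0 :=
    Finset.sum_nonneg (fun i _ => by positivity)
  -- hence RHS positive, so some term of RHS is 1
  by_contra hne'
  have hcase : ∀ j ∈ hDfin'.toFinset,
      ((Function.update mu' j (mu' j - 1), mu') ≠ a ∧
       (mu', Function.update mu' j (mu' j - 1)) ≠ a) := by
    intro j hj
    constructor
    · intro heq
      have : mu' = mu := congrArg Prod.snd heq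
      exact hne' this.symm
    · intro heq
      have h1 : mu' = Function.update mu m (mu m - 1) := congrArg Prod.fst heq
      have hs : ∑ᶠ i, Function.update mu m (mu m - 1) i = (∑ᶠ i, mu i) - 1 :=
        sum_update_sub_one mu hm2 (by omega)
      rw [← h1, hm3', hm3] at hs
      omega
  have z1 : ∑ i ∈ hDfin'.toFinset,
      (if (Function.update mu' i (mu' i - 1), mu') = a then (1 : ℤ) else 0) = 0 :=
    Finset.sum_eq_zero (fun j hj => if_neg (hcase j hj).1)
  have z2 : ∑ i ∈ hDfin'.toFinset,
      (if (mu', Function.update mu' i (mu' i - 1)) = a then (1 : ℤ) else 0) = 0 :=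
    Finset.sum_eq_zero (fun j hj => if_neg (hcase j hj).2)
  rw [z1, z2] at e1
  omega
end
end

section
/- Let R be a root system with a ℤ/m-grading (R_j)_{j∈ℤ/m}. Let y ∈ Y and r ∈ ℤ_{>0} be such that r·(y,α) ∈ ℤ for all α ∈ R, and let R(y) = { α ∈ R_j for some j : (y,α) ∈ ℤ and (y,α) ≡ j (mod m) }. Let y_1 ∈ Y satisfy −1 < (y_1,α) < 1 for all α ∈ R and (y_1,α) ≠ 0 for all α ∈ R(y). Then y + r^{-1} y_1 ∈ Y′, i.e. for every j ∈ ℤ/m and α ∈ R_j, (y + r^{-1} y_1, α) is not an integer congruent to j mod m. -/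
open scoped Classical

noncomputable section

/-- A root system: finite-dimensional `ℚ`-vector spaces `Y`, `X` with a perfect
pairing, a finite set of roots `R ⊆ X` with coroots `α ↦ α∨ ∈ Y`, satisfying the
usual axioms (in particular `R = -R` and the reflections preserve `R`). -/
structure RootSystemQ (Y : Type*) (X : Type*) [AddCommGroup Y] [Module ℚ Y]
    [AddCommGroup X] [Module ℚ X] where
  pair : Y →ₗ[ℚ] X →ₗ[ℚ] ℚ
  R : Finset X
  coroot : X → Y
  finY : FiniteDimensional ℚ Y
  finX : FiniteDimensional ℚ X
  nondeg_left : ∀ y : Y, (∀ x : X, pair y x = 0) → y = 0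
  nondeg_right : ∀ x : X, (∀ y : Y, pair y x = 0) → x = 0
  root_ne_zero : ∀ α ∈ R, α ≠ (0 : X)
  neg_mem : ∀ α ∈ R, -α ∈ R
  coroot_neg : ∀ α ∈ R, coroot (-α) = -coroot α
  pair_coroot_self : ∀ α ∈ R, pair (coroot α) α = 2
  reflect_mem : ∀ α ∈ R, ∀ β ∈ R, β - pair (coroot α) β • α ∈ R

/-- A `ℤ/m`-grading of a root system, encoded by a grading function
`grade : X → ZMod m`; the graded piece `R_j` is `{α ∈ R | grade α = j}`.
The axioms say: if `α + α' ∈ R` then `α + α'` has grade `j + j'`, and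
`-α` has grade `-j` (i.e. `α + α' = 0` forces `j + j' = 0`). -/
structure ZModGrading {Y X : Type*} [AddCommGroup Y] [Module ℚ Y]
    [AddCommGroup X] [Module ℚ X] (m : ℕ) (P : RootSystemQ Y X) where
  grade : X → ZMod m
  grade_add : ∀ α ∈ P.R, ∀ β ∈ P.R, α + β ∈ P.R → grade (α + β) = grade α + grade β
  grade_neg : ∀ α ∈ P.R, grade (-α) = -grade α

variable {Y X : Type*} [AddCommGroup Y] [Module ℚ Y] [AddCommGroup X] [Module ℚ X]

/-- cf. 1.4(a) of the paper: with `R(y)` the set of roots `α ∈ R_j`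
with `(y,α)` an integer congruent to `j` mod `m`, if `r·(y,α) ∈ ℤ` for all roots,
`-1 < (y₁,α) < 1` for all roots, and `(y₁,α) ≠ 0` for `α ∈ R(y)`, then
`y + r⁻¹y₁ ∈ Y′`. -/
theorem statement8 (m : ℕ) (hm : 0 < m) (P : RootSystemQ Y X) (G : ZModGrading m P)
    (y : Y) (r : ℕ) (hr : 0 < r)
    (hyr : ∀ α ∈ P.R, ∃ N : ℤ, (r : ℚ) * P.pair y α = (N : ℚ))
    (y₁ : Y)
    (hy₁ : ∀ α ∈ P.R, -1 < P.pair y₁ α ∧ P.pair y₁ α < 1)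
    (hy₁0 : ∀ α ∈ P.R, (∃ N : ℤ, P.pair y α = (N : ℚ) ∧ (N : ZMod m) = G.grade α) →
      P.pair y₁ α ≠ 0) :
    ∀ α ∈ P.R, ∀ N : ℤ, (N : ZMod m) = G.grade α →
      P.pair (y + (r : ℚ)⁻¹ • y₁) α ≠ (N : ℚ) := by
  intro α hα N hN h
  obtain ⟨M, hM⟩ := hyr α hα
  obtain ⟨hb1, hb2⟩ := hy₁ α hα
  have hr0 : (r : ℚ) ≠ 0 := by exact_mod_cast hr.ne'
  simp only [map_add, map_smul, LinearMap.add_apply, LinearMap.smul_apply, smul_eq_mul] at h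
  -- multiply by r : M + (y₁,α) = r*N
  have key : (M : ℚ) + P.pair y₁ α = (r : ℚ) * N := by
    have := congrArg (fun t => (r : ℚ) * t) h
    simp only [mul_add] at this
    rw [hM] at this
    rw [← this]
    field_simp
  have hbZ : P.pair y₁ α = ((r * N - M : ℤ) : ℚ) := by
    push_cast
    linarith [key]
  have hzero : (r * N - M : ℤ) = 0 := by
    have h1 : (-1 : ℚ) < ((r * N - M : ℤ) : ℚ) := by rw [← hbZ]; exact hb1
    have h2 : ((r * N - M : ℤ) : ℚ) < 1 := by rw [← hbZ]; exact hb2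
    have h1' : (-1 : ℤ) < r * N - M := by exact_mod_cast h1
    have h2' : (r * N - M : ℤ) < 1 := by exact_mod_cast h2
    omega
  have hb0 : P.pair y₁ α = 0 := by rw [hbZ, hzero]; norm_num
  have hyN : P.pair y α = (N : ℚ) := by
    have : (r : ℚ) * P.pair y α = (r : ℚ) * N := by
      rw [hM]
      have : ((r * N - M : ℤ) : ℚ) = 0 := by rw [hzero]; norm_num
      push_cast at this
      linarith
    exact mul_left_cancel₀ hr0 this
  exact hy₁0 α hα ⟨N, hyN, hN⟩ hb0
end
end

section
/- Let R be a root system with a ℤ/m-grading (R_j)_{j∈ℤ/m}. Let y, y' ∈ Y with y ∼_m y', let r, r' ∈ ℤ_{>0} with r·(y,α) ∈ ℤ and r'·(y',α) ∈ ℤ for all α ∈ R, and let R(y) = { α ∈ R_j for some j : (y,α) ∈ ℤ and (y,α) ≡ j (mod m) }. Let y_1, y_1' ∈ Y satisfy −1 < (y_1,α) < 1 and −1 < (y_1',α) < 1 for all α ∈ R, and (y_1,α)(y_1',α) > 0 for all α ∈ R(y). Then y + r^{-1} y_1 ∼_m y' + (r')^{-1} y_1'. -/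
open scoped Classical

noncomputable section

variable {Y X : Type*} [AddCommGroup Y] [Module ℚ Y] [AddCommGroup X] [Module ℚ X]

set_option maxHeartbeats 1000000 in
/-- cf. 1.4(b) of the paper: if `y ∼_m y'`, `r·(y,α) ∈ ℤ`,
`r'·(y',α) ∈ ℤ`, `-1 < (y₁,α), (y₁',α) < 1` for all roots, and
`(y₁,α)·(y₁',α) > 0` for all `α ∈ R(y)`, then `y + r⁻¹y₁ ∼_m y' + r'⁻¹y₁'`. -/
theorem statement9 (m : ℕ) (hm : 0 < m) (P : RootSystemQ Y X) (G : ZModGrading m P)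
    (y y' : Y)
    (hsim : ∀ α ∈ P.R, ∀ N : ℤ, (N : ZMod m) = G.grade α →
      ((N : ℚ) ≤ P.pair y α ↔ (N : ℚ) ≤ P.pair y' α))
    (r r' : ℕ) (hr : 0 < r) (hr' : 0 < r')
    (hyr : ∀ α ∈ P.R, ∃ N : ℤ, (r : ℚ) * P.pair y α = (N : ℚ))
    (hyr' : ∀ α ∈ P.R, ∃ N : ℤ, (r' : ℚ) * P.pair y' α = (N : ℚ))
    (y₁ y₁' : Y)
    (hy₁ : ∀ α ∈ P.R, -1 < P.pair y₁ α ∧ P.pair y₁ α < 1)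
    (hy₁' : ∀ α ∈ P.R, -1 < P.pair y₁' α ∧ P.pair y₁' α < 1)
    (hpos : ∀ α ∈ P.R, (∃ N : ℤ, P.pair y α = (N : ℚ) ∧ (N : ZMod m) = G.grade α) →
      0 < P.pair y₁ α * P.pair y₁' α) :
    ∀ α ∈ P.R, ∀ N : ℤ, (N : ZMod m) = G.grade α →
      ((N : ℚ) ≤ P.pair (y + (r : ℚ)⁻¹ • y₁) α ↔
        (N : ℚ) ≤ P.pair (y' + (r' : ℚ)⁻¹ • y₁') α) := by

  intro α hα N hN
  obtain ⟨n, hn⟩ := hyr α hα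
  obtain ⟨n', hn'⟩ := hyr' α hα
  set a := P.pair y α with ha
  set a' := P.pair y' α with ha'
  set b := P.pair y₁ α with hb
  set b' := P.pair y₁' α with hb'
  have hr0 : (0:ℚ) < r := by exact_mod_cast hr
  have hr0' : (0:ℚ) < r' := by exact_mod_cast hr'
  have hb1 := hy₁ α hα
  have hb1' := hy₁' α hα
  have h1 : ((N:ℚ) ≤ a ↔ (N:ℚ) ≤ a') := hsim α hα N hN
  have h2 : (a ≤ (N:ℚ) ↔ a' ≤ (N:ℚ)) := by
    have hneg : (-α) ∈ P.R := P.neg_mem α hα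
    have hc : ((-N : ℤ) : ZMod m) = G.grade (-α) := by
      rw [G.grade_neg α hα, ← hN]; push_cast; ring
    have := hsim (-α) hneg (-N) hc
    simp only [map_neg, Int.cast_neg, neg_le_neg_iff] at this
    exact this
  have hpair : P.pair (y + (r : ℚ)⁻¹ • y₁) α = a + (r:ℚ)⁻¹ * b := by
    simp [map_add, map_smul, ha, hb]
  have hpair' : P.pair (y' + (r' : ℚ)⁻¹ • y₁') α = a' + (r':ℚ)⁻¹ * b' := by
    simp [map_add, map_smul, ha', hb']
  rw [hpair, hpair']
  have key : (r:ℚ) * (a + (r:ℚ)⁻¹ * b) = n + b := by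
    rw [mul_add, mul_inv_cancel_left₀ hr0.ne', hn]
  have key' : (r':ℚ) * (a' + (r':ℚ)⁻¹ * b') = n' + b' := by
    rw [mul_add, mul_inv_cancel_left₀ hr0'.ne', hn']
  rcases lt_trichotomy a (N:ℚ) with hlt | heq | hgt
  · -- a < N, both sides false
    have hlt' : a' < (N:ℚ) := by
      by_contra h
      exact absurd (h1.2 (not_lt.1 h)) (not_le.2 hlt)
    have han : (n:ℚ) + 1 ≤ (r:ℚ) * N := by
      have : (n:ℚ) < (r:ℚ) * N := by rw [← hn]; exact (mul_lt_mul_iff_right₀ hr0).2 hlt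
      have h : n < (r:ℤ) * N := by exact_mod_cast this
      exact_mod_cast Int.add_one_le_iff.mpr h
    have han' : (n':ℚ) + 1 ≤ (r':ℚ) * N := by
      have : (n':ℚ) < (r':ℚ) * N := by rw [← hn']; exact (mul_lt_mul_iff_right₀ hr0').2 hlt'
      have h : n' < (r':ℤ) * N := by exact_mod_cast this
      exact_mod_cast Int.add_one_le_iff.mpr h
    constructor
    · intro h
      have := mul_le_mul_of_nonneg_left h hr0.le
      rw [key] at this
      linarith [hb1.2]
    · intro h
      exfalso
      have := mul_le_mul_of_nonneg_left h hr0'.le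
      rw [key'] at this
      linarith [hb1'.2]
  · -- a = N
    have heq' : a' = (N:ℚ) := le_antisymm (h2.1 heq.le) (h1.1 heq.ge)
    have hbb : 0 < b * b' := hpos α hα ⟨N, heq, hN⟩
    have hb0 : b ≠ 0 := fun h => by simp [h] at hbb
    have hb0' : b' ≠ 0 := fun h => by simp [h] at hbb
    rw [heq, heq']
    have hsign : (0 < b ∧ 0 < b') ∨ (b < 0 ∧ b' < 0) := mul_pos_iff.1 hbb
    constructor
    · intro h
      have hb' : 0 ≤ b := by nlinarith
      rcases hsign with ⟨_, h2⟩ | ⟨h1, _⟩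
      · nlinarith [mul_pos (inv_pos.2 hr0') h2]
      · linarith
    · intro h
      have hb'' : 0 ≤ b' := by nlinarith
      rcases hsign with ⟨h1, _⟩ | ⟨_, h2⟩
      · nlinarith [mul_pos (inv_pos.2 hr0) h1]
      · linarith
  · -- N < a, both sides true
    have hgt' : (N:ℚ) < a' := by
      by_contra h
      exact absurd (h2.2 (not_lt.1 h)) (not_le.2 hgt)
    have han : (r:ℚ) * N + 1 ≤ (n:ℚ) := by
      have : (r:ℚ) * N < (n:ℚ) := by rw [← hn]; exact (mul_lt_mul_iff_right₀ hr0).2 hgt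
      have h : (r:ℤ) * N < n := by exact_mod_cast this
      exact_mod_cast Int.add_one_le_iff.mpr h
    have han' : (r':ℚ) * N + 1 ≤ (n':ℚ) := by
      have : (r':ℚ) * N < (n':ℚ) := by rw [← hn']; exact (mul_lt_mul_iff_right₀ hr0').2 hgt'
      have h : (r':ℤ) * N < n' := by exact_mod_cast this
      exact_mod_cast Int.add_one_le_iff.mpr h
    constructor
    · intro _
      have hlt2 : (r':ℚ) * N < (r':ℚ) * (a' + (r':ℚ)⁻¹ * b') := by
        rw [key']; linarith [hb1'.1]
      exact ((mul_lt_mul_iff_right₀ hr0').1 hlt2).le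
    · intro _
      have hlt2 : (r:ℚ) * N < (r:ℚ) * (a + (r:ℚ)⁻¹ * b) := by
        rw [key]; linarith [hb1.1]
      exact ((mul_lt_mul_iff_right₀ hr0).1 hlt2).le
end
end

section
/- Let R be a root system. Let y, y' ∈ Y satisfy (y,α) ∈ ℤ and (y',α) ∈ ℤ for all α ∈ R, and suppose that for all α ∈ R one has (y,α) ≥ 0 ⟺ (y',α) ≥ 0. Let y_1, y_1' ∈ Y satisfy −1 < (y_1,α) < 1 and −1 < (y_1',α) < 1 for all α ∈ R, and (y_1,α)(y_1',α) > 0 for every α ∈ R with (y,α) = 0. Then for every α ∈ R one has (y + y_1, α)(y' + y_1', α) > 0. -/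
open scoped Classical

noncomputable section

variable {Y X : Type*} [AddCommGroup Y] [Module ℚ Y] [AddCommGroup X] [Module ℚ X]

/-- cf. B.4(b) of the paper. -/
theorem statement11 (P : RootSystemQ Y X) (y y' : Y)
    (hy : ∀ α ∈ P.R, ∃ N : ℤ, P.pair y α = (N : ℚ))
    (hy' : ∀ α ∈ P.R, ∃ N : ℤ, P.pair y' α = (N : ℚ))
    (hsgn : ∀ α ∈ P.R, (0 ≤ P.pair y α ↔ 0 ≤ P.pair y' α))
    (y₁ y₁' : Y)
    (h₁ : ∀ α ∈ P.R, -1 < P.pair y₁ α ∧ P.pair y₁ α < 1)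
    (h₁' : ∀ α ∈ P.R, -1 < P.pair y₁' α ∧ P.pair y₁' α < 1)
    (h0 : ∀ α ∈ P.R, P.pair y α = 0 → 0 < P.pair y₁ α * P.pair y₁' α) :
    ∀ α ∈ P.R, 0 < P.pair (y + y₁) α * P.pair (y' + y₁') α := by

  intro α hα
  have hneg := P.neg_mem α hα
  obtain ⟨N, hN⟩ := hy α hα
  obtain ⟨M, hM⟩ := hy' α hα
  have hs := hsgn α hα
  have hs2 := hsgn (-α) hneg
  rw [map_neg, map_neg, neg_nonneg, neg_nonneg] at hs2
  obtain ⟨hb1, hb2⟩ := h₁ α hα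
  obtain ⟨hc1, hc2⟩ := h₁' α hα
  simp only [map_add, LinearMap.add_apply]
  rcases lt_trichotomy (P.pair y α) 0 with h | h | h
  · have hN1 : P.pair y α ≤ -1 := by
      rw [hN] at h ⊢
      have : N < 0 := by exact_mod_cast h
      exact_mod_cast (by omega : N ≤ -1)
    have hM0 : P.pair y' α < 0 := by
      by_contra hcon
      exact absurd (hs.mpr (le_of_not_gt hcon)) (not_le.mpr h)
    have hM1 : P.pair y' α ≤ -1 := by
      rw [hM] at hM0 ⊢
      have : M < 0 := by exact_mod_cast hM0
      exact_mod_cast (by omega : M ≤ -1)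
    have : P.pair y α + P.pair y₁ α < 0 := by linarith
    have : P.pair y' α + P.pair y₁' α < 0 := by linarith
    exact mul_pos_of_neg_of_neg ‹_› ‹_›
  · have hM0 : P.pair y' α = 0 :=
      le_antisymm (hs2.mp (by rw [h])) (hs.mp (by rw [h]))
    rw [h, hM0, zero_add, zero_add]
    exact h0 α hα h
  · have hN1 : 1 ≤ P.pair y α := by
      rw [hN] at h ⊢
      have : 0 < N := by exact_mod_cast h
      exact_mod_cast (by omega : 1 ≤ N)
    have hM0 : 0 < P.pair y' α := by
      rcases lt_or_eq_of_le (hs.mp h.le) with h' | h'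
      · exact h'
      · exact absurd (hs2.mpr h'.ge) (not_le.mpr h)
    have hM1 : 1 ≤ P.pair y' α := by
      rw [hM] at hM0 ⊢
      have : 0 < M := by exact_mod_cast hM0
      exact_mod_cast (by omega : 1 ≤ M)
    have : 0 < P.pair y α + P.pair y₁ α := by linarith
    have : 0 < P.pair y' α + P.pair y₁' α := by linarith
    exact mul_pos ‹_› ‹_›
end
end

section
/- Let R be a root system with a ℤ/m-grading (R_j)_{j∈ℤ/m}, and let W_0 be the subgroup of the Weyl group generated by the reflections s_α with α ∈ R_0; assume each R_j is stable under W_0. For y, y' ∈ Y with (y,α) ≠ 1 ≠ (y',α) for all α ∈ R_1, write y ≈ y' if ((y,α)−1)((y',α)−1) > 0 for every α ∈ R_1. If y_1, y_1', y_2, y_2' ∈ Y′ satisfy y_1 ≈ y_1' and y_2 ≈ y_2', then Σ_{w∈W_0} v^{τ(y_1, w(y_2))} = Σ_{w∈W_0} v^{τ(y_1', w(y_2'))} in ℤ[v, v^{-1}]. -/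
open scoped Classical

noncomputable section

variable {Y X : Type*} [AddCommGroup Y] [Module ℚ Y] [AddCommGroup X] [Module ℚ X]

/-- The subgroup `W₀` of the Weyl group generated by the reflections attached to
roots `α ∈ R₀`, recorded together with both its action on `Y` (first component,
the contragredient action) and its action on `X` (second component). -/
def W0P (m : ℕ) (P : RootSystemQ Y X) (G : ZModGrading m P) :
    Subgroup ((Y ≃ₗ[ℚ] Y) × (X ≃ₗ[ℚ] X)) :=
  Subgroup.closure {p | ∃ α ∈ P.R, G.grade α = 0 ∧
    (∀ y : Y, p.1 y = y - P.pair y α • P.coroot α) ∧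
    (∀ x : X, p.2 x = x - P.pair (P.coroot α) x • α)}

/-- `τ(y,y') = #{α ∈ R₁ : ((y,α)−1)((y',α)−1) < 0} − #{α ∈ R₀ : (y,α)(y',α) < 0}`. -/
def tauP (m : ℕ) (P : RootSystemQ Y X) (G : ZModGrading m P) (y y' : Y) : ℤ :=
  ((P.R.filter fun α => G.grade α = 1 ∧
      (P.pair y α - 1) * (P.pair y' α - 1) < 0).card : ℤ) -
  ((P.R.filter fun α => G.grade α = 0 ∧
      P.pair y α * P.pair y' α < 0).card : ℤ)

/-- Membership in `Y′ = Y − ∪_{j, α ∈ R_j} {y : (y,α) ∈ ℤ, (y,α) ≡ j mod m}`. -/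
def memYprime (m : ℕ) (P : RootSystemQ Y X) (G : ZModGrading m P) (y : Y) : Prop :=
  ∀ α ∈ P.R, ∀ N : ℤ, (N : ZMod m) = G.grade α → P.pair y α ≠ (N : ℚ)

/-! The sum is symmetric in its two arguments, invariant under `W₀` acting on either of them, and
constant on the cells cut out by the walls `(·, α) = 0`, `α ∈ R₀`, and the hyperplanes
`(·, γ) = 1`, `γ ∈ R₁`. An `≈`-class is convex, so `y` is joined to `y'` inside it by a generic
segment. Just before and just after the first wall `(·, α) = 0` it crosses, the segment passes
through two points exchanged by `s_α ∈ W₀`, which therefore have the same sum; induct on the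
number of walls separating `y` from `y'`. -/

open Filter Topology Finset

section Signs

variable {a b c t : ℚ}

lemma pos_mul_of_pos_mul_of_pos_mul (hab : 0 < a * b) (hac : 0 < a * c) : 0 < b * c := by
  have : 0 < a * a * (b * c) := by linarith [mul_pos hab hac]
  exact pos_of_mul_pos_right this (mul_self_nonneg a)

lemma mul_neg_iff_of_pos_mul (hab : 0 < a * b) : a * c < 0 ↔ b * c < 0 := by
  rcases pos_and_pos_or_neg_and_neg_of_mul_pos hab with ⟨ha, hb⟩ | ⟨ha, hb⟩
  · simp [mul_neg_iff, ha, hb, ha.not_gt, hb.not_gt]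
  · simp [mul_neg_iff, ha, hb, ha.not_gt, hb.not_gt]

lemma mul_add_mul_sub_nonneg (hab : 0 ≤ a * b) (ht₀ : 0 ≤ t) (ht₁ : t ≤ 1) :
    0 ≤ a * (a + t * (b - a)) := by
  nlinarith [mul_self_nonneg a, mul_nonneg ht₀ hab]

lemma mul_add_mul_sub_pos (ha : a ≠ 0) (hab : 0 ≤ a * b) (ht₀ : 0 ≤ t) (ht₁ : t < 1) :
    0 < a * (a + t * (b - a)) := by
  nlinarith [mul_self_pos.2 ha, mul_nonneg ht₀ hab]

/-- On the segment from `a` to `b`, with `a * b < 0`, the zero is at `t = a / (a - b)`. -/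
lemma mul_add_mul_sub_eq_of_mul_neg (hab : a * b < 0) :
    a * (a + t * (b - a)) = a * (a - b) * (a / (a - b) - t) := by
  have : a - b ≠ 0 := fun h => by
    rw [sub_eq_zero.1 h] at hab
    nlinarith [mul_self_nonneg b]
  field_simp
  ring

lemma pos_mul_sub_of_mul_neg (hab : a * b < 0) : 0 < a * (a - b) := by
  nlinarith [mul_self_nonneg a]

lemma div_sub_mem_Ioo_of_mul_neg (hab : a * b < 0) : a / (a - b) ∈ Set.Ioo 0 1 := by
  rcases mul_neg_iff.1 hab with ⟨ha, hb⟩ | ⟨ha, hb⟩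
  · exact ⟨div_pos ha (by linarith), (div_lt_one (by linarith)).2 (by linarith)⟩
  · exact ⟨div_pos_of_neg_of_neg ha (by linarith),
      (div_lt_one_of_neg (by linarith)).2 (by linarith)⟩

lemma eventually_pos_mul_add_mul (ha : a ≠ 0) (b : ℚ) :
    ∀ᶠ t in 𝓝[>] (0 : ℚ), 0 < a * (a + t * b) := by
  have hcont : Continuous fun t : ℚ => a * (a + t * b) := by fun_prop
  exact eventually_nhdsWithin_of_eventually_nhds
    ((hcont.tendsto' 0 (a * a) (by simp)).eventually_const_lt (mul_self_pos.2 ha))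

lemma eventually_add_mul_ne_zero (a : ℚ) (hb : b ≠ 0) : ∀ᶠ t in 𝓝[>] (0 : ℚ), a + t * b ≠ 0 := by
  rcases eq_or_ne a 0 with rfl | ha
  · filter_upwards [self_mem_nhdsWithin] with t (ht : 0 < t)
    simp [ht.ne', hb]
  · filter_upwards [eventually_pos_mul_add_mul ha b] with t ht h
    simp [h] at ht

end Signs

namespace RootSystemQ

variable (P : RootSystemQ Y X)

def SameSide (S : Finset X) (c : ℚ) (y y' : Y) : Prop :=
  ∀ α ∈ S, 0 < (P.pair y α - c) * (P.pair y' α - c)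

def separating (S : Finset X) (c : ℚ) (y y' : Y) : Finset X :=
  S.filter fun α => (P.pair y α - c) * (P.pair y' α - c) < 0

variable {P} {S : Finset X} {c : ℚ} {y y' z : Y}

lemma mem_separating {α : X} :
    α ∈ P.separating S c y y' ↔ α ∈ S ∧ (P.pair y α - c) * (P.pair y' α - c) < 0 :=
  mem_filter

@[simp]
lemma pair_add_smul_apply (y d : Y) (t : ℚ) (x : X) :
    P.pair (y + t • d) x = P.pair y x + t * P.pair d x := by
  simp

lemma sameSide_self_iff : P.SameSide S c y y ↔ ∀ α ∈ S, P.pair y α ≠ c := by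
  simp only [SameSide, mul_self_pos, sub_ne_zero]

lemma SameSide.symm (h : P.SameSide S c y y') : P.SameSide S c y' y :=
  fun α hα => mul_comm (P.pair y α - c) _ ▸ h α hα

lemma SameSide.trans (h : P.SameSide S c y y') (h' : P.SameSide S c y' z) :
    P.SameSide S c y z :=
  fun α hα => pos_mul_of_pos_mul_of_pos_mul (h.symm α hα) (h' α hα)

lemma SameSide.self_left (h : P.SameSide S c y y') : P.SameSide S c y y :=
  h.trans h.symm

lemma SameSide.segment_of_nonneg (hy : P.SameSide S c y y)
    (h : ∀ α ∈ S, 0 ≤ (P.pair y α - c) * (P.pair z α - c)) {t : ℚ} (ht₀ : 0 ≤ t) (ht₁ : t < 1) :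
    P.SameSide S c y (y + t • (z - y)) := by
  intro α hα
  have hne := (sameSide_self_iff.1 hy) α hα
  convert mul_add_mul_sub_pos (sub_ne_zero.2 hne) (h α hα) ht₀ ht₁ using 2
  simp only [pair_add_smul_apply, map_sub, LinearMap.sub_apply]
  ring

lemma SameSide.segment (h : P.SameSide S c y y') {t : ℚ} (ht₀ : 0 ≤ t) (ht₁ : t < 1) :
    P.SameSide S c y (y + t • (y' - y)) :=
  h.self_left.segment_of_nonneg (fun α hα => (h α hα).le) ht₀ ht₁

lemma SameSide.eventually (hy : P.SameSide S c y y) (d : Y) :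
    ∀ᶠ t in 𝓝[>] (0 : ℚ), P.SameSide S c y (y + t • d) := by
  suffices h : ∀ α ∈ S, ∀ᶠ t in 𝓝[>] (0 : ℚ), 0 < (P.pair y α - c) * (P.pair (y + t • d) α - c) from
    (eventually_all_finset S).2 h
  intro α hα
  filter_upwards [eventually_pos_mul_add_mul (sub_ne_zero.2 ((sameSide_self_iff.1 hy) α hα))
    (P.pair d α)] with t ht
  convert ht using 2
  simp only [pair_add_smul_apply]
  ring

lemma separating_comm (y y' : Y) : P.separating S c y y' = P.separating S c y' y := by
  simp only [separating, mul_comm]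

lemma SameSide.separating_eq (h : P.SameSide S c y y') (z : Y) :
    P.separating S c y z = P.separating S c y' z :=
  filter_congr fun α hα => mul_neg_iff_of_pos_mul (h α hα)

lemma sameSide_of_separating_eq_empty (hy : P.SameSide S c y y) (hy' : P.SameSide S c y' y')
    (h : P.separating S c y y' = ∅) : P.SameSide S c y y' := by
  intro α hα
  have hnot : ¬ (P.pair y α - c) * (P.pair y' α - c) < 0 := fun hlt =>
    (Finset.eq_empty_iff_forall_notMem.1 h) α (mem_filter.2 ⟨hα, hlt⟩)
  exact lt_of_le_of_ne (not_lt.1 hnot) (mul_ne_zero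
    (sub_ne_zero.2 ((sameSide_self_iff.1 hy) α hα))
    (sub_ne_zero.2 ((sameSide_self_iff.1 hy') α hα))).symm

end RootSystemQ

namespace ZModGrading

variable {m : ℕ} {P : RootSystemQ Y X} (G : ZModGrading m P)

/-- The graded piece `R_j`. -/
def roots (j : ZMod m) : Finset X := P.R.filter fun α => G.grade α = j

variable {G} {j : ZMod m} {α : X}

lemma mem_roots : α ∈ G.roots j ↔ α ∈ P.R ∧ G.grade α = j := mem_filter

end ZModGrading

section WeylGroup

variable {m : ℕ} {P : RootSystemQ Y X} {G : ZModGrading m P}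

open RootSystemQ

lemma tauP_eq_card_sub_card (y z : Y) :
    tauP m P G y z = #(P.separating (G.roots 1) 1 y z) - #(P.separating (G.roots 0) 0 y z) := by
  simp only [tauP, separating, ZModGrading.roots, filter_filter, sub_zero]

lemma tauP_comm (y z : Y) : tauP m P G y z = tauP m P G z y := by
  simp only [tauP_eq_card_sub_card, separating_comm y z]

lemma tauP_congr_left {y y' : Y} (h₀ : P.SameSide (G.roots 0) 0 y y')
    (h₁ : P.SameSide (G.roots 1) 1 y y') (z : Y) : tauP m P G y z = tauP m P G y' z := by
  simp only [tauP_eq_card_sub_card, h₀.separating_eq, h₁.separating_eq]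

lemma pair_apply_of_mem_W0P {p : (Y ≃ₗ[ℚ] Y) × (X ≃ₗ[ℚ] X)} (hp : p ∈ W0P m P G) (y : Y) (x : X) :
    P.pair (p.1 y) (p.2 x) = P.pair y x := by
  induction hp using Subgroup.closure_induction generalizing y x with
  | mem q hq =>
    obtain ⟨α, hα, -, hY, hX⟩ := hq
    simp only [hY, hX, map_sub, map_smul, LinearMap.sub_apply, LinearMap.smul_apply, smul_eq_mul,
      P.pair_coroot_self α hα]
    ring
  | one => rfl
  | mul a b _ _ ha hb => exact (ha _ _).trans (hb _ _)
  | inv a _ ha => simpa using (ha (a.1.symm y) (a.2.symm x)).symm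

lemma exists_reflection_mem_W0P {α : X} (hα : α ∈ G.roots 0) :
    ∃ u ∈ W0P m P G, ∀ y : Y, u.1 y = y - P.pair y α • P.coroot α := by
  have h2 := P.pair_coroot_self α (ZModGrading.mem_roots.1 hα).1
  refine ⟨(Module.reflection (f := P.pair.flip α) h2,
      Module.reflection (f := P.pair (P.coroot α)) h2),
    Subgroup.subset_closure ⟨α, (ZModGrading.mem_roots.1 hα).1, (ZModGrading.mem_roots.1 hα).2,
      fun y => Module.reflection_apply y h2, fun x => Module.reflection_apply x h2⟩,
    fun y => Module.reflection_apply y h2⟩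

variable (hstab : ∀ p ∈ W0P m P G, ∀ α ∈ P.R, p.2 α ∈ P.R ∧ G.grade (p.2 α) = G.grade α)
include hstab

lemma mem_separating_apply_of_mem_W0P {p : (Y ≃ₗ[ℚ] Y) × (X ≃ₗ[ℚ] X)} (hp : p ∈ W0P m P G)
    {j : ZMod m} {c : ℚ} {y z : Y} {α : X} (hα : α ∈ P.separating (G.roots j) c y z) :
    p.2 α ∈ P.separating (G.roots j) c (p.1 y) (p.1 z) := by
  simp only [separating, mem_filter, ZModGrading.mem_roots] at hα ⊢
  obtain ⟨⟨hαR, hαj⟩, hlt⟩ := hα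
  obtain ⟨hpR, hpj⟩ := hstab p hp α hαR
  exact ⟨⟨hpR, hpj.trans hαj⟩, by simpa only [pair_apply_of_mem_W0P hp] using hlt⟩

lemma card_separating_apply_of_mem_W0P {p : (Y ≃ₗ[ℚ] Y) × (X ≃ₗ[ℚ] X)} (hp : p ∈ W0P m P G)
    (j : ZMod m) (c : ℚ) (y z : Y) :
    #(P.separating (G.roots j) c (p.1 y) (p.1 z)) = #(P.separating (G.roots j) c y z) := by
  refine card_nbij' (fun α => p⁻¹.2 α) (fun α => p.2 α) (fun α hα => ?_)
    (fun α hα => mem_separating_apply_of_mem_W0P hstab hp hα) (fun α _ => ?_) (fun α _ => ?_)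
  · simpa using mem_separating_apply_of_mem_W0P hstab (inv_mem hp) hα
  · simp
  · simp

lemma tauP_apply_of_mem_W0P {p : (Y ≃ₗ[ℚ] Y) × (X ≃ₗ[ℚ] X)} (hp : p ∈ W0P m P G) (y z : Y) :
    tauP m P G (p.1 y) (p.1 z) = tauP m P G y z := by
  simp only [tauP_eq_card_sub_card, card_separating_apply_of_mem_W0P hstab hp]

end WeylGroup

/-- `Σ_{w ∈ W₀} v^{τ(y, w b)}`. -/
def tauSum (m : ℕ) (P : RootSystemQ Y X) (G : ZModGrading m P) (y b : Y) : LaurentPolynomial ℤ :=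
  ∑ᶠ p ∈ W0P m P G, LaurentPolynomial.T (tauP m P G y (p.1 b))

section TauSum

variable {m : ℕ} {P : RootSystemQ Y X} {G : ZModGrading m P}

open RootSystemQ

lemma tauSum_congr_left {y y' : Y} (h₀ : P.SameSide (G.roots 0) 0 y y')
    (h₁ : P.SameSide (G.roots 1) 1 y y') (b : Y) : tauSum m P G y b = tauSum m P G y' b := by
  simp only [tauSum, tauP_congr_left h₀ h₁]

variable (hstab : ∀ p ∈ W0P m P G, ∀ α ∈ P.R, p.2 α ∈ P.R ∧ G.grade (p.2 α) = G.grade α)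
include hstab

lemma tauSum_apply_left {u : (Y ≃ₗ[ℚ] Y) × (X ≃ₗ[ℚ] X)} (hu : u ∈ W0P m P G) (y b : Y) :
    tauSum m P G (u.1 y) b = tauSum m P G y b := by
  refine finsum_mem_eq_of_bijOn (u⁻¹ * ·) ⟨fun p hp => mul_mem (inv_mem hu) hp,
    (mul_right_injective u⁻¹).injOn, fun p hp => ⟨u * p, mul_mem hu hp, by group⟩⟩ fun p _ => ?_
  rw [← tauP_apply_of_mem_W0P hstab hu y]
  simp

lemma tauSum_comm (y b : Y) : tauSum m P G y b = tauSum m P G b y := by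
  refine finsum_mem_eq_of_bijOn (·⁻¹) ⟨fun p hp => inv_mem hp, inv_injective.injOn,
    fun p hp => ⟨p⁻¹, inv_mem hp, inv_inv p⟩⟩ fun p hp => ?_
  rw [tauP_comm, ← tauP_apply_of_mem_W0P hstab (inv_mem hp)]
  simp

end TauSum

namespace RootSystemQ

variable (P : RootSystemQ Y X)

/-- Walking from `z` to `y'`, the walls `(·, α) = 0`, `α ∈ S`, are crossed one at a time, up to
walls that are crossed together on every segment ending at `y'`. -/
def IsGeneric (S : Finset X) (y' z : Y) : Prop :=
  ∀ α ∈ S, ∀ β ∈ S, P.pair y' α * P.pair z β = P.pair y' β * P.pair z α →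
    ∀ v, P.pair y' α * P.pair v β = P.pair y' β * P.pair v α

variable {P}

lemma exists_eventually_isGeneric (S : Finset X) (y y' : Y) :
    ∃ d : Y, ∀ᶠ t in 𝓝[>] (0 : ℚ), P.IsGeneric S y' (y + t • d) := by
  let L : X × X → Module.Dual ℚ Y := fun q =>
    P.pair y' q.1 • P.pair.flip q.2 - P.pair y' q.2 • P.pair.flip q.1
  have hL : ∀ q v, L q v = P.pair y' q.1 * P.pair v q.2 - P.pair y' q.2 * P.pair v q.1 :=
    fun q v => by simp [L]
  obtain ⟨d, hd⟩ := Module.Dual.exists_forall_ne_zero_of_forall_exists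
    (fun q : ((S ×ˢ S).filter fun q => L q ≠ 0) => L q)
    fun q => DFunLike.ne_iff.1 (mem_filter.1 q.2).2
  have key : ∀ q ∈ S ×ˢ S, ∀ᶠ t in 𝓝[>] (0 : ℚ), L q (y + t • d) = 0 → L q = 0 := by
    intro q hq
    by_cases h : L q = 0
    · exact Eventually.of_forall fun _ _ => h
    · filter_upwards [eventually_add_mul_ne_zero (L q y) (hd ⟨q, mem_filter.2 ⟨hq, h⟩⟩)]
        with t ht h0
      exact absurd (by simpa using h0) ht
  refine ⟨d, ?_⟩
  filter_upwards [(eventually_all_finset _).2 key] with t ht α hα β hβ hz v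
  have hLv := LinearMap.congr_fun (ht (α, β) (mem_product.2 ⟨hα, hβ⟩) (by rw [hL]; linarith)) v
  simp only [hL, LinearMap.zero_apply] at hLv
  linarith

lemma exists_first_wall {S : Finset X} {y y' : Y} (hgen : P.IsGeneric S y' y)
    (hne : (P.separating S 0 y y').Nonempty) :
    ∃ α ∈ P.separating S 0 y y', ∃ t : ℚ, 0 ≤ t ∧ t < 1 ∧ P.pair (y + t • (y' - y)) α = 0 ∧
      (∀ β ∈ S, 0 ≤ P.pair y β * P.pair (y + t • (y' - y)) β) ∧
      ∀ β ∈ S, P.pair (y + t • (y' - y)) β = 0 → ∃ k : ℚ, ∀ v, P.pair v β = k * P.pair v α := by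
  have hsep : ∀ {β}, β ∈ P.separating S 0 y y' ↔ β ∈ S ∧ P.pair y β * P.pair y' β < 0 := by
    simp [mem_separating]
  obtain ⟨α, hα, hmin⟩ := (P.separating S 0 y y').exists_min_image
    (fun β => P.pair y β / (P.pair y β - P.pair y' β)) hne
  obtain ⟨hαS, hαneg⟩ := hsep.1 hα
  set t := P.pair y α / (P.pair y α - P.pair y' α)
  have hpair : ∀ β, P.pair (y + t • (y' - y)) β = P.pair y β + t * (P.pair y' β - P.pair y β) := by
    simp
  have ht := div_sub_mem_Ioo_of_mul_neg hαneg
  have hα0 : P.pair (y + t • (y' - y)) α = 0 := by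
    have h := mul_add_mul_sub_eq_of_mul_neg (t := t) hαneg
    rw [sub_self, mul_zero] at h
    rw [hpair]
    exact (mul_eq_zero.1 h).resolve_left (left_ne_zero_of_mul hαneg.ne)
  refine ⟨α, hα, t, ht.1.le, ht.2, hα0, fun β hβ => ?_, fun β hβ hβ0 => ?_⟩
  · rw [hpair]
    by_cases hβneg : P.pair y β * P.pair y' β < 0
    · rw [mul_add_mul_sub_eq_of_mul_neg hβneg]
      exact mul_nonneg (pos_mul_sub_of_mul_neg hβneg).le
        (sub_nonneg.2 (hmin β (hsep.2 ⟨hβ, hβneg⟩)))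
    · exact mul_add_mul_sub_nonneg (not_lt.1 hβneg) ht.1.le ht.2.le
  · have hminor : (1 - t) * (P.pair y' α * P.pair y β - P.pair y' β * P.pair y α) = 0 := by
      rw [hpair] at hα0 hβ0
      linear_combination P.pair y' α * hβ0 - P.pair y' β * hα0
    have hprop := hgen α hαS β hβ
      (sub_eq_zero.1 ((mul_eq_zero.1 hminor).resolve_left (by linarith [ht.2])))
    have hy'α : P.pair y' α ≠ 0 := right_ne_zero_of_mul hαneg.ne
    exact ⟨P.pair y' β / P.pair y' α, fun v => by
      rw [div_mul_eq_mul_div, eq_div_iff hy'α]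
      linarith [hprop v]⟩

lemma sameSide_self_and_separating_subset_erase {S : Finset X} {α : X} {y y' y₀ z : Y}
    (hy₀α : P.pair y₀ α = 0) (hwall : ∀ β ∈ S, P.pair y₀ β = 0 → 0 < P.pair y' β * P.pair z β)
    (hoff : ∀ β ∈ S, P.pair y₀ β ≠ 0 → 0 < P.pair y β * P.pair z β) :
    P.SameSide S 0 z z ∧ P.separating S 0 z y' ⊆ (P.separating S 0 y y').erase α := by
  refine ⟨sameSide_self_iff.2 fun β hβ h0 => ?_, fun β hβ => ?_⟩
  · by_cases hβ0 : P.pair y₀ β = 0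
    · simpa [h0] using hwall β hβ hβ0
    · simpa [h0] using hoff β hβ hβ0
  · obtain ⟨hβS, hβneg⟩ := mem_separating.1 hβ
    simp only [sub_zero] at hβneg
    by_cases hβ0 : P.pair y₀ β = 0
    · linarith [hwall β hβS hβ0, mul_comm (P.pair y' β) (P.pair z β)]
    · refine mem_erase.2 ⟨fun h => hβ0 (h ▸ hy₀α), mem_separating.2 ⟨hβS, ?_⟩⟩
      rw [sub_zero, sub_zero]
      exact (mul_neg_iff_of_pos_mul (hoff β hβS hβ0)).2 hβneg

end RootSystemQ

section WallCrossing

variable {m : ℕ} {P : RootSystemQ Y X} {G : ZModGrading m P}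

open RootSystemQ

lemma exists_reflection_across_wall {α : X} (hα : α ∈ G.roots 0) {y y' y₀ : Y}
    (hy : P.SameSide (G.roots 0) 0 y y) (hy' : P.SameSide (G.roots 0) 0 y' y')
    (hαneg : P.pair y α * P.pair y' α < 0) (hy₀α : P.pair y₀ α = 0)
    (hside : ∀ β ∈ G.roots 0, 0 ≤ P.pair y β * P.pair y₀ β)
    (hpar : ∀ β ∈ G.roots 0, P.pair y₀ β = 0 → ∃ k : ℚ, ∀ v, P.pair v β = k * P.pair v α)
    (h₁ : P.SameSide (G.roots 1) 1 y y₀) :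
    ∃ yp, P.SameSide (G.roots 0) 0 y yp ∧ P.SameSide (G.roots 1) 1 y yp ∧
      ∃ u ∈ W0P m P G, P.SameSide (G.roots 0) 0 (u.1 yp) (u.1 yp) ∧
        P.SameSide (G.roots 1) 1 y (u.1 yp) ∧
        P.separating (G.roots 0) 0 (u.1 yp) y' ⊆ (P.separating (G.roots 0) 0 y y').erase α := by
  obtain ⟨u, hu, hu_apply⟩ := exists_reflection_mem_W0P hα
  have h2 := P.pair_coroot_self α (ZModGrading.mem_roots.1 hα).1
  have hu₀ : u.1 y₀ = y₀ := by rw [hu_apply, hy₀α, zero_smul, sub_zero]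
  have huα : ∀ z, P.pair (u.1 z) α = -P.pair z α := fun z => by
    simp [hu_apply, h2]
    ring
  have hreg : P.SameSide ((G.roots 0).filter fun β => P.pair y₀ β ≠ 0) 0 y₀ y₀ :=
    sameSide_self_iff.2 fun β hβ => by simpa using (mem_filter.1 hβ).2
  obtain ⟨ε, ⟨h₀ε, h₁ε⟩, hε⟩ := (((hreg.eventually (u.1 (y - y₀))).and
    (h₁.symm.self_left.eventually (u.1 (y - y₀)))).and (Ioc_mem_nhdsGT one_pos)).exists
  set yp := y + (1 - ε) • (y₀ - y)
  have hym : u.1 yp = y₀ + ε • u.1 (y - y₀) := by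
    rw [show yp = y₀ + ε • (y - y₀) by module, map_add, map_smul, hu₀]
  have hypα : P.pair yp α = ε * P.pair y α := by
    simp only [yp, pair_add_smul_apply, map_sub, LinearMap.sub_apply, hy₀α]
    ring
  have hwall : ∀ β ∈ G.roots 0, P.pair y₀ β = 0 → 0 < P.pair y' β * P.pair (u.1 yp) β := by
    intro β hβ hβ0
    obtain ⟨k, hk⟩ := hpar β hβ hβ0
    have hk0 : k ≠ 0 := by
      rintro rfl
      exact (sameSide_self_iff.1 hy') β hβ (by simpa using hk y')
    rw [hk, hk, huα, hypα]
    nlinarith [mul_pos (mul_self_pos.2 hk0) hε.1]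
  have hoff : ∀ β ∈ G.roots 0, P.pair y₀ β ≠ 0 → 0 < P.pair y β * P.pair (u.1 yp) β := by
    intro β hβ hβ0
    have hyy₀ : 0 < P.pair y₀ β * P.pair y β := by
      rw [mul_comm]
      exact (hside β hβ).lt_of_ne (mul_ne_zero ((sameSide_self_iff.1 hy) β hβ) hβ0).symm
    have := h₀ε β (mem_filter.2 ⟨hβ, hβ0⟩)
    rw [sub_zero, sub_zero, ← hym] at this
    exact pos_mul_of_pos_mul_of_pos_mul hyy₀ this
  obtain ⟨hreg', hsub⟩ := sameSide_self_and_separating_subset_erase hy₀α hwall hoff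
  exact ⟨yp, hy.segment_of_nonneg (by simpa using hside) (by linarith [hε.2]) (by linarith [hε.1]),
    h₁.segment (by linarith [hε.2]) (by linarith [hε.1]), u, hu, hreg', h₁.trans (hym ▸ h₁ε), hsub⟩

lemma exists_wall_crossing {y y' : Y} (hy : P.SameSide (G.roots 0) 0 y y)
    (hy' : P.SameSide (G.roots 0) 0 y' y') (h₁ : P.SameSide (G.roots 1) 1 y y')
    (hne : (P.separating (G.roots 0) 0 y y').Nonempty) :
    ∃ yp, P.SameSide (G.roots 0) 0 y yp ∧ P.SameSide (G.roots 1) 1 y yp ∧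
      ∃ u ∈ W0P m P G, P.SameSide (G.roots 0) 0 (u.1 yp) (u.1 yp) ∧
        P.SameSide (G.roots 1) 1 (u.1 yp) y' ∧
        #(P.separating (G.roots 0) 0 (u.1 yp) y') < #(P.separating (G.roots 0) 0 y y') := by
  obtain ⟨d, hd⟩ := exists_eventually_isGeneric (G.roots 0) y y'
  obtain ⟨t, hgen, h₀t, h₁t⟩ := (hd.and ((hy.eventually d).and (h₁.self_left.eventually d))).exists
  have hsep := h₀t.separating_eq y'
  obtain ⟨α, hα, s, hs₀, hs₁, hα₀, hside, hpar⟩ := exists_first_wall hgen (hsep ▸ hne)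
  obtain ⟨hαR, hαneg⟩ := mem_separating.1 hα
  obtain ⟨yp, hp₀, hp₁, u, hu, hm₀, hm₁, hsub⟩ := exists_reflection_across_wall hαR
    h₀t.symm.self_left hy' (by simpa using hαneg) hα₀ hside hpar
    ((h₁t.symm.trans h₁).segment hs₀ hs₁)
  refine ⟨yp, h₀t.trans hp₀, h₁t.trans hp₁, u, hu, hm₀, (h₁t.trans hm₁).symm.trans h₁, ?_⟩
  rw [hsep]
  exact (card_le_card hsub).trans_lt (card_erase_lt_of_mem hα)

end WallCrossing

lemma tauSum_eq_of_sameSide {m : ℕ} {P : RootSystemQ Y X} {G : ZModGrading m P}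
    (hstab : ∀ p ∈ W0P m P G, ∀ α ∈ P.R, p.2 α ∈ P.R ∧ G.grade (p.2 α) = G.grade α) {y y' : Y}
    (hy : P.SameSide (G.roots 0) 0 y y) (hy' : P.SameSide (G.roots 0) 0 y' y')
    (h₁ : P.SameSide (G.roots 1) 1 y y') (b : Y) : tauSum m P G y b = tauSum m P G y' b := by
  induction hn : #(P.separating (G.roots 0) 0 y y') using Nat.strong_induction_on generalizing y
    with | _ n ih =>
  rcases (P.separating (G.roots 0) 0 y y').eq_empty_or_nonempty with h | h
  · exact tauSum_congr_left (RootSystemQ.sameSide_of_separating_eq_empty hy hy' h) h₁ b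
  obtain ⟨yp, hp₀, hp₁, u, hu, hm₀, hm₁, hlt⟩ := exists_wall_crossing hy hy' h₁ h
  calc tauSum m P G y b = tauSum m P G yp b := tauSum_congr_left hp₀ hp₁ b
    _ = tauSum m P G (u.1 yp) b := (tauSum_apply_left hstab hu yp b).symm
    _ = tauSum m P G y' b := ih _ (hn ▸ hlt) hm₀ hm₁ rfl

lemma sameSide_self_of_memYprime {m : ℕ} {P : RootSystemQ Y X} {G : ZModGrading m P} {y : Y}
    (hy : memYprime m P G y) : P.SameSide (G.roots 0) 0 y y :=
  RootSystemQ.sameSide_self_iff.2 fun α hα => by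
    simpa using hy α (ZModGrading.mem_roots.1 hα).1 0 (by simp [(ZModGrading.mem_roots.1 hα).2])

theorem statement16_general (m : ℕ) (P : RootSystemQ Y X) (G : ZModGrading m P)
    (hstab : ∀ p ∈ W0P m P G, ∀ α ∈ P.R, p.2 α ∈ P.R ∧ G.grade (p.2 α) = G.grade α)
    (y₁ y₁' y₂ y₂' : Y)
    (h₁ : memYprime m P G y₁) (h₁' : memYprime m P G y₁')
    (h₂ : memYprime m P G y₂) (h₂' : memYprime m P G y₂')
    (ha : ∀ α ∈ P.R, G.grade α = 1 → 0 < (P.pair y₁ α - 1) * (P.pair y₁' α - 1))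
    (hb : ∀ α ∈ P.R, G.grade α = 1 → 0 < (P.pair y₂ α - 1) * (P.pair y₂' α - 1)) :
    (∑ᶠ p ∈ W0P m P G, (LaurentPolynomial.T (tauP m P G y₁ (p.1 y₂)) : LaurentPolynomial ℤ)) =
      ∑ᶠ p ∈ W0P m P G, (LaurentPolynomial.T (tauP m P G y₁' (p.1 y₂')) : LaurentPolynomial ℤ) := by
  have hR₁ : ∀ {y y' : Y}, (∀ α ∈ P.R, G.grade α = 1 → 0 < (P.pair y α - 1) * (P.pair y' α - 1)) →
      P.SameSide (G.roots 1) 1 y y' := fun h α hα =>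
    h α (ZModGrading.mem_roots.1 hα).1 (ZModGrading.mem_roots.1 hα).2
  change tauSum m P G y₁ y₂ = tauSum m P G y₁' y₂'
  calc tauSum m P G y₁ y₂
      = tauSum m P G y₁' y₂ := tauSum_eq_of_sameSide hstab (sameSide_self_of_memYprime h₁)
          (sameSide_self_of_memYprime h₁') (hR₁ ha) y₂
    _ = tauSum m P G y₂ y₁' := tauSum_comm hstab y₁' y₂
    _ = tauSum m P G y₂' y₁' := tauSum_eq_of_sameSide hstab (sameSide_self_of_memYprime h₂)
          (sameSide_self_of_memYprime h₂') (hR₁ hb) y₁'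
    _ = tauSum m P G y₁' y₂' := tauSum_comm hstab y₂' y₁'

/-- cf. A.1(a) of the paper: the sum `Σ_{w∈W₀} v^{τ(y₁, w(y₂))}`
only depends on the coarse equivalence classes (for `≈`) of `y₁` and `y₂`. -/
theorem statement16 (m : ℕ) (hm : 0 < m) (P : RootSystemQ Y X) (G : ZModGrading m P)
    (hstab : ∀ p ∈ W0P m P G, ∀ α ∈ P.R, p.2 α ∈ P.R ∧ G.grade (p.2 α) = G.grade α)
    (y₁ y₁' y₂ y₂' : Y)
    (h₁ : memYprime m P G y₁) (h₁' : memYprime m P G y₁')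
    (h₂ : memYprime m P G y₂) (h₂' : memYprime m P G y₂')
    (ha : ∀ α ∈ P.R, G.grade α = 1 → 0 < (P.pair y₁ α - 1) * (P.pair y₁' α - 1))
    (hb : ∀ α ∈ P.R, G.grade α = 1 → 0 < (P.pair y₂ α - 1) * (P.pair y₂' α - 1)) :
    (∑ᶠ p ∈ W0P m P G, (LaurentPolynomial.T (tauP m P G y₁ (p.1 y₂)) : LaurentPolynomial ℤ)) =
      ∑ᶠ p ∈ W0P m P G, (LaurentPolynomial.T (tauP m P G y₁' (p.1 y₂')) : LaurentPolynomial ℤ) :=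
  statement16_general m P G hstab y₁ y₁' y₂ y₂' h₁ h₁' h₂ h₂' ha hb
end
end
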